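/- arXiv:1705.05317 — 8 statements merged into one kernel-verified Lean document; each statement's English description precedes it below -/
import Mathlib

section
/- For the path P_n on n ≥ 2 vertices, cfc(P_n) = ⌈log₂ n⌉. -/
open SimpleGraph

universe u

/-- An edge coloring makes `G` conflict-free connected: every two distinct vertices are
joined by a path on which some color appears on exactly one edge. -/
def IsCFCColoring {V : Type u} (G : SimpleGraph V) (c : Sym2 V → ℕ) : Prop :=
  ∀ u v : V, u ≠ v → ∃ p : G.Walk u v, p.IsPath ∧
    ∃ color : ℕ, (p.edges.map c).count color = 1

/-- The conflict-free connection number: the least number of colors in a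
conflict-free connection coloring. -/
noncomputable def cfcNum {V : Type u} (G : SimpleGraph V) : ℕ :=
  sInf {n : ℕ | ∃ c : Sym2 V → ℕ, (∀ e ∈ G.edgeSet, c e < n) ∧ IsCFCColoring G c}

/-- The line graph of `G`. -/
def lineG {V : Type u} (G : SimpleGraph V) : SimpleGraph G.edgeSet where
  Adj e f := e ≠ f ∧ ∃ v : V, v ∈ (e : Sym2 V) ∧ v ∈ (f : Sym2 V)
  symm := ⟨by rintro e f ⟨h, v, hv, hw⟩; exact ⟨h.symm, v, hw, hv⟩⟩
  loopless := ⟨by rintro e ⟨h, _⟩; exact h rfl⟩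

/-- The `k`-iterated line graph, as a bundled pair (vertex type, graph). -/
def iterLine {V : Type u} (G : SimpleGraph V) : ℕ → (W : Type u) × SimpleGraph W
  | 0 => ⟨V, G⟩
  | n + 1 => ⟨(iterLine G n).2.edgeSet, lineG (iterLine G n).2⟩

/-- The subgraph of `G` induced by the set of cut-edges (bridges) of `G`. -/
def cutG {V : Type u} (G : SimpleGraph V) : SimpleGraph V :=
  SimpleGraph.fromEdgeSet {e | G.IsBridge e}

/-- `h(G)`: the maximum of `cfcNum(K)` over connected components `K` of `C(G)`. -/
noncomputable def hG {V : Type u} (G : SimpleGraph V) : ℕ :=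
  sSup (Set.range fun K : (cutG G).ConnectedComponent => cfcNum ((cutG G).induce K.supp))

/-- `G` is claw-free: no induced `K_{1,3}`. -/
def ClawFree {V : Type u} (G : SimpleGraph V) : Prop :=
  ∀ v a b c : V, G.Adj v a → G.Adj v b → G.Adj v c →
    a ≠ b → a ≠ c → b ≠ c → ¬G.Adj a b → ¬G.Adj a c → ¬G.Adj b c → False

/-- `G` has no cut vertex: deleting any vertex leaves a connected graph. -/
def NoCutVertex {V : Type u} (G : SimpleGraph V) : Prop :=
  ∀ v : V, (G.induce {w | w ≠ v}).Connected

/-- `B` is a block of `G`: a maximal vertex set inducing a connected subgraph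
without cut vertices. -/
def IsBlock {V : Type u} (G : SimpleGraph V) (B : Set V) : Prop :=
  (G.induce B).Connected ∧ NoCutVertex (G.induce B) ∧
    ∀ B' : Set V, B ⊆ B' → (G.induce B').Connected → NoCutVertex (G.induce B') → B' = B

/-- Every component of `C(G)` is a cut-path of `G`: `C(G)` is a linear forest
(acyclic with maximum degree at most 2) and every internal vertex (degree-2 vertex
of `C(G)`) has degree 2 in `G`. -/
def CutPathCondition {V : Type u} (G : SimpleGraph V) : Prop :=
  (cutG G).IsAcyclic ∧ (∀ v : V, ((cutG G).neighborSet v).ncard ≤ 2) ∧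
    ∀ v : V, ((cutG G).neighborSet v).ncard = 2 → (G.neighborSet v).ncard = 2

/-!
A path is a tree, so the only path between two vertices of `P_n` is the segment joining them,
and a CFC-coloring of `P_n` is a sequence of `n - 1` colors in which every nonempty block of
consecutive entries has an entry occurring exactly once. Splitting such a sequence at an entry
occurring once in it leaves two such sequences with one color fewer, so with `N` colors its
length is at most `2 ^ N - 1`. Conversely, coloring the `i`-th edge by the `2`-adic valuation
of `i` works, since in a block of consecutive positive integers the largest valuation is
attained only once.
-/

open List

namespace List

theorem count_eq_one_iff_exists_append {α : Type*} [BEq α] [LawfulBEq α] {l : List α} {x : α} :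
    l.count x = 1 ↔ ∃ s t, l = s ++ x :: t ∧ x ∉ s ∧ x ∉ t := by
  constructor
  · intro h
    obtain ⟨s, t, rfl⟩ := append_of_mem (one_le_count_iff.mp h.ge)
    rw [count_append, count_cons_self] at h
    exact ⟨s, t, rfl, count_eq_zero.mp (by omega), count_eq_zero.mp (by omega)⟩
  · rintro ⟨s, t, rfl, hs, ht⟩
    rw [count_append, count_cons_self, count_eq_zero_of_not_mem hs, count_eq_zero_of_not_mem ht]

theorem length_lt_two_pow_card_toFinset {α : Type*} [DecidableEq α] {l : List α}
    (h : ∀ s, s <:+: l → s ≠ [] → ∃ x, s.count x = 1) :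
    l.length < 2 ^ l.toFinset.card := by
  rcases eq_or_ne l [] with rfl | hne
  · simp
  obtain ⟨x, hx⟩ := h l (infix_refl l) hne
  obtain ⟨s, t, rfl, hs, ht⟩ := count_eq_one_iff_exists_append.mp hx
  have ihs := length_lt_two_pow_card_toFinset (l := s)
    fun u hu => h u (hu.trans (prefix_append s (x :: t)).isInfix)
  have iht := length_lt_two_pow_card_toFinset (l := t)
    fun u hu => h u (hu.trans ((suffix_cons x t).trans (suffix_append s (x :: t))).isInfix)
  have hcard : ∀ u ⊆ s ++ x :: t, x ∉ u → u.toFinset.card < (s ++ x :: t).toFinset.card :=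
    fun u hu hxu => Finset.card_lt_card <|
      (Finset.ssubset_iff_of_subset fun y hy => mem_toFinset.mpr (hu (mem_toFinset.mp hy))).mpr
        ⟨x, by simp, by simpa using hxu⟩
  obtain ⟨N, hN⟩ := Nat.exists_eq_add_one_of_ne_zero
    (Finset.card_ne_zero_of_mem (by simp : x ∈ (s ++ x :: t).toFinset))
  have hs' := Nat.pow_le_pow_right two_pos
    (Nat.le_of_lt_succ (hN ▸ hcard s (subset_append_left _ _) hs))
  have ht' := Nat.pow_le_pow_right two_pos
    (Nat.le_of_lt_succ (hN ▸ hcard t (fun y hy => by simp [hy]) ht))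
  rw [hN, pow_succ, length_append, length_cons]
  omega
termination_by l.length

theorem exists_eq_range'_of_isInfix {s : List ℕ} {a m : ℕ} (h : s <:+: range' a m) :
    ∃ b k, a ≤ b ∧ b + k ≤ a + m ∧ s = range' b k := by
  obtain ⟨p, q, hpq⟩ := h
  obtain ⟨k, hk, hps, -⟩ := range'_eq_append_iff.mp hpq.symm
  obtain ⟨j, hj, -, rfl⟩ := range'_eq_append_iff.mp hps.symm
  exact ⟨a + j * 1, k - j, by omega, by omega, rfl⟩

end List

namespace Nat

/-- Between two odd multiples `2^M r < 2^M s` of `2^M` lies the even multiple `2^M (r + 1)`. -/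
theorem exists_padicValNat_two_lt_of_padicValNat_eq {p q : ℕ} (hp : p ≠ 0) (hpq : p < q)
    (h : padicValNat 2 p = padicValNat 2 q) :
    ∃ z, p < z ∧ z ≤ q ∧ padicValNat 2 p < padicValNat 2 z := by
  set M := padicValNat 2 p
  obtain ⟨r, hr⟩ : 2 ^ M ∣ p := pow_padicValNat_dvd
  obtain ⟨s, hs⟩ : 2 ^ M ∣ q := h ▸ pow_padicValNat_dvd
  have hr_odd : ¬ 2 ∣ r := fun ⟨t, ht⟩ =>
    have h2M : 2 ^ (M + 1) ∣ p := ⟨t, by rw [hr, ht, pow_succ]; ring⟩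
    pow_succ_padicValNat_not_dvd hp h2M
  have hrs : r < s := Nat.lt_of_mul_lt_mul_left (hr ▸ hs ▸ hpq)
  refine ⟨2 ^ M * (r + 1), hr ▸ Nat.mul_lt_mul_of_pos_left (by omega) (by positivity),
    hs ▸ Nat.mul_le_mul_left _ hrs, ?_⟩
  obtain ⟨t, ht⟩ : 2 ∣ r + 1 := by omega
  rw [← Nat.succ_le_iff, ← padicValNat_dvd_iff_le (by positivity)]
  exact ⟨t, by rw [ht, pow_succ]; ring⟩

theorem exists_count_map_padicValNat_two_range'_eq_one {a k : ℕ} (ha : a ≠ 0) (hk : k ≠ 0) :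
    ∃ x, ((range' a k).map (padicValNat 2)).count x = 1 := by
  obtain ⟨m, hm, hmax⟩ := Finset.exists_max_image (Finset.Ico a (a + k)) (padicValNat 2)
    ⟨a, by simp; omega⟩
  simp only [Finset.mem_Ico] at hm hmax
  have huniq : ∀ j, a ≤ j → j < a + k → padicValNat 2 j = padicValNat 2 m → j = m := by
    intro j hj hjk hjm
    by_contra hne
    rcases Nat.lt_or_gt_of_ne hne with hlt | hlt
    · obtain ⟨z, hjz, hzm, hz⟩ :=
        exists_padicValNat_two_lt_of_padicValNat_eq (by omega) hlt hjm
      exact absurd (hmax z ⟨by omega, by omega⟩) (by omega)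
    · obtain ⟨z, hmz, hzj, hz⟩ :=
        exists_padicValNat_two_lt_of_padicValNat_eq (by omega) hlt hjm.symm
      exact absurd (hmax z ⟨by omega, by omega⟩) (by omega)
  obtain ⟨j, hj⟩ : ∃ j, a + k - m = j + 1 := ⟨a + k - m - 1, by omega⟩
  have hsplit : range' a k = range' a (m - a) ++ m :: range' (m + 1) j := by
    have h := range'_append (s := a) (m := m - a) (n := j + 1) (step := 1)
    rwa [show a + 1 * (m - a) = m by omega, show m - a + (j + 1) = k by omega, eq_comm] at h
  refine ⟨padicValNat 2 m, count_eq_one_iff_exists_append.mpr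
    ⟨_, _, by rw [hsplit, map_append, map_cons], ?_, ?_⟩⟩
  all_goals
    simp only [mem_map, mem_range'_1, not_exists, not_and]
    intro j hj hjm
    have := huniq j (by omega) (by omega) hjm
    omega

theorem padicValNat_lt_clog {p m n : ℕ} [Fact p.Prime] (hm : m ≠ 0) (hmn : m < n) :
    padicValNat p m < clog p n := by
  have hp := (Fact.out : p.Prime).one_lt
  rw [← Nat.pow_lt_pow_iff_right hp]
  calc p ^ padicValNat p m ≤ m := Nat.le_of_dvd (by omega) pow_padicValNat_dvd
    _ < n := hmn
    _ ≤ p ^ clog p n := le_pow_clog hp n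

end Nat

namespace SimpleGraph

theorem isCFCColoring_of_forall_lt {V : Type u} [LinearOrder V] {G : SimpleGraph V}
    {c : Sym2 V → ℕ}
    (h : ∀ u v, u < v → ∃ p : G.Walk u v, p.IsPath ∧ ∃ x, (p.edges.map c).count x = 1) :
    IsCFCColoring G c := by
  intro u v huv
  rcases huv.lt_or_gt with huv | hvu
  · exact h u v huv
  · obtain ⟨p, hp, x, hx⟩ := h v u hvu
    exact ⟨p.reverse, hp.reverse, x, by rwa [Walk.edges_reverse, map_reverse, count_reverse]⟩

theorem IsCFCColoring.exists_count_eq_one_of_isAcyclic {V : Type u} {G : SimpleGraph V}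
    {c : Sym2 V → ℕ} (hc : IsCFCColoring G c) (hG : G.IsAcyclic) {u v : V} (huv : u ≠ v)
    {p : G.Walk u v} (hp : p.IsPath) : ∃ x, (p.edges.map c).count x = 1 := by
  obtain ⟨q, hq, hx⟩ := hc u v huv
  have : q = p := congrArg Subtype.val (hG.subsingleton_path u v |>.elim ⟨q, hq⟩ ⟨p, hp⟩)
  exact this ▸ hx

namespace pathGraph

variable {n : ℕ}

def walkUp (a : ℕ) :
    (k : ℕ) → (h : a + k < n) → (pathGraph n).Walk ⟨a, by omega⟩ ⟨a + k, h⟩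
  | 0, _ => .nil
  | k + 1, h => (walkUp a k (by omega)).concat (pathGraph_adj.mpr (.inl rfl))

theorem val_le_of_mem_support_walkUp {a k : ℕ} {h : a + k < n} {x : Fin n}
    (hx : x ∈ (walkUp a k h).support) : x.val ≤ a + k := by
  induction k with
  | zero => simp_all [walkUp]
  | succ k ih =>
    rw [walkUp, Walk.support_concat, mem_append, mem_singleton] at hx
    rcases hx with hx | rfl
    · exact (ih hx).trans (by omega)
    · exact le_rfl

theorem isPath_walkUp (a k : ℕ) (h : a + k < n) : (walkUp a k h).IsPath := by
  induction k with
  | zero => exact Walk.IsPath.nil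
  | succ k ih =>
    exact (ih (by omega)).concat (fun hx => by simpa using val_le_of_mem_support_walkUp hx) _

theorem map_edges_walkUp {α : Type*} (c : Sym2 (Fin n) → α) (d : ℕ → α)
    (hd : ∀ i (hi : i + 1 < n), c s(⟨i, by omega⟩, ⟨i + 1, hi⟩) = d i) (a k : ℕ)
    (h : a + k < n) : (walkUp a k h).edges.map c = (range' a k).map d := by
  induction k with
  | zero => rfl
  | succ k ih =>
    rw [walkUp, Walk.edges_concat, range'_concat, concat_eq_append, map_append, map_append,
      ih (by omega)]
    simp only [map_cons, map_nil, one_mul]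
    exact congrArg (_ ++ [·]) (hd (a + k) h)

theorem mem_edges_of_le_of_lt {u v : Fin n} (p : (pathGraph n).Walk u v) {k : ℕ}
    (hk : k + 1 < n) (huk : u.val ≤ k) (hkv : k < v.val) :
    s(⟨k, by omega⟩, ⟨k + 1, hk⟩) ∈ p.edges := by
  induction p with
  | nil => omega
  | @cons a w b ha q ih =>
    rw [Walk.edges_cons, mem_cons]
    by_cases hwk : w.val ≤ k
    · exact .inr (ih hwk hkv)
    · rcases pathGraph_adj.mp ha with ha | ha
      · left
        congr <;> omega
      · omega

end pathGraph

theorem pathGraph_isAcyclic (n : ℕ) : (pathGraph n).IsAcyclic := by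
  rw [isAcyclic_iff_forall_adj_isBridge]
  intro v w hvw
  rw [isBridge_iff_forall_walk_mem_edges]
  intro p
  rcases pathGraph_adj.mp hvw with h | h
  · convert pathGraph.mem_edges_of_le_of_lt p (k := v.val) (h ▸ w.isLt) le_rfl (by omega)
    exact h.symm
  · rw [Sym2.eq_swap, ← mem_reverse, ← Walk.edges_reverse]
    convert pathGraph.mem_edges_of_le_of_lt p.reverse (k := w.val) (h ▸ v.isLt) le_rfl (by omega)
    exact h.symm

namespace pathGraph

theorem le_two_pow_of_isCFCColoring {n m : ℕ} {c : Sym2 (Fin n) → ℕ}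
    (hc : ∀ e ∈ (pathGraph n).edgeSet, c e < m) (hcfc : IsCFCColoring (pathGraph n) c) :
    n ≤ 2 ^ m := by
  let d : ℕ → ℕ := fun i =>
    if hi : i + 1 < n then c s(⟨i, by omega⟩, ⟨i + 1, hi⟩) else 0
  have hd : ∀ i (hi : i + 1 < n), c s(⟨i, by omega⟩, ⟨i + 1, hi⟩) = d i :=
    fun i hi => by simp only [d, dif_pos hi]
  have hinfix : ∀ s, s <:+: (range' 0 (n - 1)).map d → s ≠ [] → ∃ x, s.count x = 1 := by
    intro s hs hne
    obtain ⟨l, hl, rfl⟩ := infix_map_iff.mp hs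
    obtain ⟨a, k, -, hak, rfl⟩ := exists_eq_range'_of_isInfix hl
    have hk : k ≠ 0 := by rintro rfl; exact hne rfl
    have h : a + k < n := by omega
    obtain ⟨x, hx⟩ := hcfc.exists_count_eq_one_of_isAcyclic (pathGraph_isAcyclic n)
      (by simp; omega) (isPath_walkUp a k h)
    exact ⟨x, map_edges_walkUp c d hd a k h ▸ hx⟩
  have hcolors : ((range' 0 (n - 1)).map d).toFinset ⊆ Finset.range m := by
    intro x hx
    obtain ⟨i, hi, rfl⟩ := mem_map.mp (mem_toFinset.mp hx)
    have hi : i + 1 < n := by rw [mem_range'_1] at hi; omega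
    rw [Finset.mem_range, ← hd i hi]
    exact hc _ (pathGraph_adj.mpr (.inl rfl))
  have hlen := length_lt_two_pow_card_toFinset hinfix
  have hpow := Nat.pow_le_pow_right two_pos
    ((Finset.card_le_card hcolors).trans (Finset.card_range m).le)
  rw [length_map, length_range'] at hlen
  omega

/-- Edge `{i, i + 1}` gets the `2`-adic valuation of `i + 1`: the ruler sequence
`0, 1, 0, 2, 0, 1, 0, 3, …`. -/
def rulerColoring (n : ℕ) (e : Sym2 (Fin n)) : ℕ :=
  padicValNat 2 e.sup.val

theorem rulerColoring_lt_clog {n : ℕ} :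
    ∀ e ∈ (pathGraph n).edgeSet, rulerColoring n e < Nat.clog 2 n := by
  intro e
  induction e using Sym2.ind with
  | h x y =>
    intro hxy
    rw [mem_edgeSet, pathGraph_adj] at hxy
    refine Nat.padicValNat_lt_clog ?_ (x ⊔ y).isLt
    show ((max x y : Fin n) : ℕ) ≠ 0
    rw [Fin.coe_max]
    omega

theorem isCFCColoring_rulerColoring (n : ℕ) : IsCFCColoring (pathGraph n) (rulerColoring n) := by
  refine isCFCColoring_of_forall_lt fun ⟨a, ha⟩ ⟨b, hb⟩ hab => ?_
  rw [Fin.mk_lt_mk] at hab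
  obtain ⟨k, rfl⟩ : ∃ k, b = a + k := ⟨b - a, by omega⟩
  refine ⟨walkUp a k hb, isPath_walkUp a k hb, ?_⟩
  rw [map_edges_walkUp _ (padicValNat 2 ∘ (1 + ·))
      (fun i hi => by simp [rulerColoring, add_comm]),
    ← List.map_map, map_add_range', add_comm 1 a]
  exact Nat.exists_count_map_padicValNat_two_range'_eq_one (by omega) (by omega)

end pathGraph

end SimpleGraph

theorem stmt_2_general (n : ℕ) :
    cfcNum (SimpleGraph.pathGraph n) = Nat.clog 2 n := by
  open SimpleGraph.pathGraph in
  have hruler : ∃ c : Sym2 (Fin n) → ℕ,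
      (∀ e ∈ (pathGraph n).edgeSet, c e < Nat.clog 2 n) ∧ IsCFCColoring (pathGraph n) c :=
    ⟨rulerColoring n, rulerColoring_lt_clog, isCFCColoring_rulerColoring n⟩
  refine le_antisymm (Nat.sInf_le hruler) (le_csInf ⟨_, hruler⟩ ?_)
  rintro m ⟨c, hc, hcfc⟩
  exact (Nat.clog_le_iff_le_pow one_lt_two).mpr (le_two_pow_of_isCFCColoring hc hcfc)

/-- cfc(P_n) = ⌈log₂ n⌉. -/
theorem stmt_2 (n : ℕ) (hn : 2 ≤ n) :
    cfcNum (SimpleGraph.pathGraph n) = Nat.clog 2 n :=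
  stmt_2_general n
end

section
/- If G is a noncomplete 2-connected graph, then cfc(G) = 2. -/
open SimpleGraph

universe u

/-!
Colour one edge `xy` with `0` and all other edges with `1`. In a 2-connected graph any two
distinct vertices `u`, `v` are joined by a path through `xy`: Whitney's theorem (two internally
disjoint paths between any two vertices) yields a fan from `v` to `x` and `y`, and a path from `u`
avoiding `v` can be spliced into it. The colour `0` occurs exactly once on such a path, so
`cfc(G) ≤ 2`. With a single colour a conflict-free path is a single edge, which two nonadjacent
vertices do not have.
-/

namespace SimpleGraph

namespace Walk

variable {V : Type u} {G : SimpleGraph V} {a b c : V}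

def InternallyDisjoint (p q : G.Walk a b) : Prop :=
  ∀ t ∈ p.support, t ∈ q.support → t = a ∨ t = b

theorem InternallyDisjoint.symm {p q : G.Walk a b} (h : p.InternallyDisjoint q) :
    q.InternallyDisjoint p :=
  fun t hq hp => h t hp hq

theorem IsPath.append {p : G.Walk a b} {q : G.Walk b c} (hp : p.IsPath) (hq : q.IsPath)
    (h : ∀ t ∈ p.support, t ∈ q.support → t = b) : (p.append q).IsPath := by
  rw [isPath_def, support_append]
  refine hp.support_nodup.append hq.support_nodup.tail fun t htp htq => ?_
  obtain rfl := h t htp (List.mem_of_mem_tail htq)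
  have hnodup := hq.support_nodup
  rw [← cons_tail_support] at hnodup
  exact (List.nodup_cons.mp hnodup).1 htq

theorem exists_isPath_first_hit (S : V → Prop) (p : G.Walk a b) (hb : S b) :
    ∃ z, S z ∧ ∃ q : G.Walk a z, q.IsPath ∧ (∀ t ∈ q.support, t ∈ p.support) ∧
      ∀ t ∈ q.support, S t → t = z := by
  classical
  induction p with
  | nil => exact ⟨_, hb, nil, .nil, by simp, by simp⟩
  | @cons a s b h p ih =>
    by_cases ha : S a
    · exact ⟨a, ha, nil, .nil, by simp, by simp⟩
    obtain ⟨z, hz, q, -, hqp, hqS⟩ := ih hb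
    refine ⟨z, hz, (cons h q).bypass, bypass_isPath _, ?_, ?_⟩ <;> intro t ht <;>
      rcases List.mem_cons.mp (support_bypass_subset_support _ ht) with rfl | ht
    · exact start_mem_support _
    · exact List.mem_cons_of_mem _ (hqp t ht)
    · exact fun hS => absurd hS ha
    · exact hqS t ht

theorem InternallyDisjoint.exists_fan {s b a : V} {P₁ P₂ : G.Walk b s}
    (h₁ : P₁.IsPath) (h₂ : P₂.IsPath) (hP : P₁.InternallyDisjoint P₂) (R : G.Walk a b)
    (hR : s ∉ R.support) :
    ∃ (P : G.Walk b a) (P' : G.Walk b s), P.IsPath ∧ P'.IsPath ∧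
      ∀ t ∈ P.support, t ∈ P'.support → t = b := by
  classical
  obtain ⟨z, hz, q, hq, hqR, hqS⟩ :=
    R.exists_isPath_first_hit (fun t => t ∈ P₁.support ∨ t ∈ P₂.support)
      (.inl P₁.start_mem_support)
  have hzs : z ≠ s := fun h => hR (h ▸ hqR z q.end_mem_support)
  clear hqR hR
  wlog hz₁ : z ∈ P₁.support generalizing P₁ P₂
  · exact this h₂ h₁ hP.symm hz.symm (fun t ht hS => hqS t ht hS.symm) (hz.resolve_left hz₁)
  -- follow `P₁` from `b` to the first vertex `z` of `R` on `P₁ ∪ P₂`, then `R` back to `a`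
  have hs : s ∉ (P₁.takeUntil z hz₁).support :=
    endpoint_notMem_support_takeUntil h₁ hz₁ hzs.symm
  refine ⟨(P₁.takeUntil z hz₁).append q.reverse, P₂, ?_, h₂, fun t ht ht₂ => ?_⟩
  · refine (h₁.takeUntil hz₁).append hq.reverse fun t ht htq => ?_
    rw [support_reverse, List.mem_reverse] at htq
    exact hqS t htq (.inl (support_takeUntil_subset_support _ hz₁ ht))
  · rcases (mem_support_append_iff _ _).mp ht with ht | ht
    · exact (hP t (support_takeUntil_subset_support _ hz₁ ht) ht₂).resolve_right
        fun h => hs (h ▸ ht)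
    · rw [support_reverse, List.mem_reverse] at ht
      obtain rfl := hqS t ht (.inr ht₂)
      exact (hP t hz₁ ht₂).resolve_right hzs

end Walk

open Walk

variable {V : Type u} {G : SimpleGraph V}

theorem exists_isPath_mem_edges_of_fan {x y u v : V} (hxy : G.Adj x y) {P : G.Walk x v}
    {Q : G.Walk y v} (hP : P.IsPath) (hQ : Q.IsPath)
    (hPQ : ∀ t ∈ P.support, t ∈ Q.support → t = v)
    (R : G.Walk u x) (hR : v ∉ R.support) :
    ∃ p : G.Walk u v, p.IsPath ∧ s(x, y) ∈ p.edges := by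
  classical
  obtain ⟨z, hz, q, hq, hqR, hqS⟩ :=
    R.exists_isPath_first_hit (fun t => t ∈ P.support ∨ t ∈ Q.support)
      (.inl P.start_mem_support)
  have hzv : z ≠ v := fun h => hR (h ▸ hqR z q.end_mem_support)
  clear hqR hR R
  wlog hzQ : z ∈ Q.support generalizing x y P Q
  · obtain ⟨p, hp, he⟩ := this hxy.symm hQ hP (fun t ht ht' => hPQ t ht' ht) hz.symm
      (fun t ht hS => hqS t ht hS.symm) (hz.resolve_right hzQ)
    exact ⟨p, hp, Sym2.eq_swap ▸ he⟩
  -- `R` up to its first vertex `z` on `P ∪ Q`, then `Q` back to `y`, the edge `yx`,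
  -- and `P` to `v`
  have hv : v ∉ (Q.takeUntil z hzQ).support := endpoint_notMem_support_takeUntil hQ hzQ hzv.symm
  have hyv : y ≠ v := by
    rintro rfl
    exact hv (start_mem_support _)
  have hyP : y ∉ P.support := fun h => hyv (hPQ y h Q.start_mem_support)
  have hcons : (cons hxy.symm P).IsPath := hP.cons hyP
  have htail : ((Q.takeUntil z hzQ).reverse.append (cons hxy.symm P)).IsPath := by
    refine (hQ.takeUntil hzQ).reverse.append hcons fun t ht ht' => ?_
    rw [support_reverse, List.mem_reverse] at ht
    rcases List.mem_cons.mp ht' with rfl | ht'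
    · rfl
    · obtain rfl := hPQ t ht' (support_takeUntil_subset_support _ hzQ ht)
      exact absurd ht hv
  refine ⟨q.append _, hq.append htail fun t htq ht => hqS t htq ?_, ?_⟩
  · rcases (mem_support_append_iff _ _).mp ht with ht | ht
    · rw [support_reverse, List.mem_reverse] at ht
      exact .inr (support_takeUntil_subset_support _ hzQ ht)
    · rcases List.mem_cons.mp ht with rfl | ht
      · exact .inr Q.start_mem_support
      · exact .inl ht
  · simp [edges_append, Sym2.eq_swap]

end SimpleGraph

section

open SimpleGraph Walk

variable {V : Type u} {G : SimpleGraph V}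

theorem NoCutVertex.exists_walk_avoiding (hG : NoCutVertex G) {u v w : V} (hu : u ≠ w)
    (hv : v ≠ w) : ∃ p : G.Walk u v, w ∉ p.support := by
  obtain ⟨p⟩ := (hG w).preconnected ⟨u, hu⟩ ⟨v, hv⟩
  let f : G.induce {t | t ≠ w} →g G := ⟨Subtype.val, id⟩
  refine ⟨p.map f, ?_⟩
  rw [Walk.support_map, List.mem_map]
  rintro ⟨⟨t, ht⟩, -, htw⟩
  exact ht htw

theorem NoCutVertex.preconnected [Fintype V] (hG : NoCutVertex G) (hV : 3 ≤ Fintype.card V) :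
    G.Preconnected := by
  classical
  intro u v
  obtain ⟨w, hw⟩ : ({u, v}ᶜ : Finset V).Nonempty := by
    rw [← Finset.card_pos, Finset.card_compl]
    have := Finset.card_le_two (a := u) (b := v)
    omega
  simp only [Finset.mem_compl, Finset.mem_insert, Finset.mem_singleton, not_or] at hw
  obtain ⟨p, -⟩ := hG.exists_walk_avoiding (Ne.symm hw.1) (Ne.symm hw.2)
  exact p.reachable

theorem NoCutVertex.exists_internallyDisjoint (hG : NoCutVertex G) {a b : V} (p : G.Walk a b)
    (hab : a ≠ b) :
    ∃ P₁ P₂ : G.Walk a b, P₁.IsPath ∧ P₂.IsPath ∧ P₁.InternallyDisjoint P₂ := by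
  induction p using Walk.concatRec with
  | Hnil => exact absurd rfl hab
  | @Hconcat a s b p h ih =>
    by_cases has : a = s
    · subst has
      exact ⟨h.toWalk, h.toWalk, h.isPath_toWalk, h.isPath_toWalk,
        fun t ht _ => by simpa using ht⟩
    obtain ⟨P₁, P₂, h₁, h₂, hdisj⟩ := ih has
    obtain ⟨R, hR⟩ := hG.exists_walk_avoiding h.ne' has
    obtain ⟨P, P', hP, hP', hPP'⟩ := hdisj.exists_fan h₁ h₂ R hR
    have hb : b ∉ P'.support := fun hb => hab (hPP' b P.end_mem_support hb).symm
    refine ⟨P, P'.concat h, hP, hP'.concat hb h, fun t ht ht' => ?_⟩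
    rw [support_concat, List.mem_append, List.mem_singleton] at ht'
    exact ht'.imp (hPP' t ht) id

theorem NoCutVertex.exists_fan (hG : NoCutVertex G) (hconn : G.Preconnected) (u : V) {x y : V}
    (hxy : x ≠ y) :
    ∃ (P : G.Walk u x) (Q : G.Walk u y), P.IsPath ∧ Q.IsPath ∧
      ∀ t ∈ P.support, t ∈ Q.support → t = u := by
  by_cases hux : u = x
  · subst hux
    obtain ⟨Q, hQ⟩ := (hconn u y).exists_isPath
    exact ⟨nil, Q, .nil, hQ, fun t ht _ => by simpa using ht⟩
  by_cases huy : u = y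
  · subst huy
    obtain ⟨P, hP⟩ := (hconn u x).exists_isPath
    exact ⟨P, nil, hP, .nil, fun t _ ht => by simpa using ht⟩
  obtain ⟨P₁, P₂, h₁, h₂, hdisj⟩ := hG.exists_internallyDisjoint (hconn u x).some hux
  obtain ⟨R, hR⟩ := hG.exists_walk_avoiding (Ne.symm hxy) hux
  obtain ⟨Q, P, hQ, hP, hQP⟩ := hdisj.exists_fan h₁ h₂ R hR
  exact ⟨P, Q, hP, hQ, fun t ht ht' => hQP t ht' ht⟩

theorem NoCutVertex.exists_isPath_mem_edges (hG : NoCutVertex G) (hconn : G.Preconnected)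
    {x y u v : V} (hxy : G.Adj x y) (huv : u ≠ v) :
    ∃ p : G.Walk u v, p.IsPath ∧ s(x, y) ∈ p.edges := by
  wlog hxv : x ≠ v generalizing x y
  · rw [not_not] at hxv
    obtain ⟨p, hp, he⟩ := this hxy.symm (hxv ▸ hxy.ne')
    exact ⟨p, hp, Sym2.eq_swap ▸ he⟩
  obtain ⟨P, Q, hP, hQ, hPQ⟩ := hG.exists_fan hconn v hxy.ne
  obtain ⟨R, hR⟩ := hG.exists_walk_avoiding huv hxv
  exact exists_isPath_mem_edges_of_fan hxy hP.reverse hQ.reverse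
    (fun t ht ht' => hPQ t (by simpa using ht) (by simpa using ht')) R hR

theorem isCFCColoring_ite_of_forall_mem_edges [DecidableEq V] {x y : V}
    (h : ∀ u v : V, u ≠ v → ∃ p : G.Walk u v, p.IsPath ∧ s(x, y) ∈ p.edges) :
    IsCFCColoring G fun e => if e = s(x, y) then 0 else 1 := by
  intro u v huv
  obtain ⟨p, hp, hxy⟩ := h u v huv
  refine ⟨p, hp, 0, ?_⟩
  calc (p.edges.map _).count 0 = p.edges.count s(x, y) := by
        simp only [List.count_eq_countP, List.countP_map]
        congr 1
        funext e
        by_cases he : e = s(x, y) <;> simp [he]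
    _ = 1 := List.count_eq_one_of_mem hp.edges_nodup hxy

theorem two_le_of_isCFCColoring {a b : V} (hab : a ≠ b) (hnab : ¬G.Adj a b) {c : Sym2 V → ℕ}
    {n : ℕ} (hc : ∀ e ∈ G.edgeSet, c e < n) (h : IsCFCColoring G c) : 2 ≤ n := by
  by_contra! hn
  obtain ⟨p, -, col, hcount⟩ := h a b hab
  have hzero : ∀ k ∈ p.edges.map c, k = 0 := by
    simp only [List.mem_map]
    rintro k ⟨e, he, rfl⟩
    have := hc e (p.edges_subset_edgeSet he)
    omega
  obtain rfl : col = 0 := hzero col (List.count_pos_iff.mp (by omega))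
  have hlen : (p.edges.map c).count 0 = (p.edges.map c).length :=
    List.count_eq_length.mpr fun k hk => (hzero k hk).symm
  rw [hcount, List.length_map, length_edges] at hlen
  exact hnab (p.adj_of_length_eq_one hlen.symm)

end

/-- A noncomplete 2-connected graph has cfc equal to 2. -/
theorem stmt_3 {V : Type u} [Fintype V] (G : SimpleGraph V) (hnc : G ≠ ⊤)
    (hcard : 3 ≤ Fintype.card V)
    (h2c : ∀ v : V, (G.induce {w | w ≠ v}).Connected) :
    cfcNum G = 2 := by
  classical
  have hG : NoCutVertex G := h2c
  have hconn : G.Preconnected := hG.preconnected hcard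
  obtain ⟨a, b, hab, hnab⟩ := ne_top_iff_exists_not_adj.mp hnc
  obtain ⟨x, hax, -, -⟩ := Walk.exists_eq_cons_of_ne hab (hconn a b).some
  have hmem : 2 ∈ {n | ∃ c : Sym2 V → ℕ, (∀ e ∈ G.edgeSet, c e < n) ∧ IsCFCColoring G c} :=
    ⟨_, fun e _ => by split_ifs <;> omega, isCFCColoring_ite_of_forall_mem_edges
      fun u v huv => hG.exists_isPath_mem_edges hconn hax huv⟩
  exact le_antisymm (Nat.sInf_le hmem)
    (le_csInf ⟨2, hmem⟩ fun n ⟨c, hc, h⟩ => two_le_of_isCFCColoring hab hnab hc h)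
end

section
/- If G is a noncomplete 2-edge-connected graph, then cfc(G) = 2. -/
open SimpleGraph

universe u

/-!
With a single color a conflict-free path is a single edge, so a noncomplete graph needs two colors.
Two suffice: color a spanning tree `T` with `1` and every other edge with `0`. For `u ≠ v` let `uw`
be the first edge of the `T`-path from `u` to `v`. Deleting it splits `T` into the side of `u` and
the side of `w` and `v`; since `uw` is not a bridge of `G`, some edge `xy ∉ T` joins the two sides,
and the path `u ⟶ x` in `T`, `xy`, `y ⟶ v` in `T` carries the color `0` exactly once.
-/

namespace SimpleGraph

variable {V : Type u} {G T : SimpleGraph V} {u v w : V}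

lemma reachable_deleteEdges_or_reachable_deleteEdges {z : V} (p : G.Walk z u) :
    (G.deleteEdges {s(u, w)}).Reachable z u ∨ (G.deleteEdges {s(u, w)}).Reachable z w := by
  induction p with
  | nil => exact .inl .rfl
  | @cons x y t hxy _ ih =>
    by_cases hedge : s(x, y) = s(t, w)
    · rcases Sym2.eq_iff.mp hedge with ⟨rfl, -⟩ | ⟨rfl, -⟩
      · exact .inl .rfl
      · exact .inr .rfl
    · have hxy' : (G.deleteEdges {s(t, w)}).Adj x y := deleteEdges_adj.mpr ⟨hxy, hedge⟩
      exact ih.imp hxy'.reachable.trans hxy'.reachable.trans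

lemma IsTree.exists_adj_not_adj_of_not_isBridge (hTG : T ≤ G) (hT : T.IsTree)
    (hG : ∀ e ∈ G.edgeSet, ¬G.IsBridge e) (huv : u ≠ v) :
    ∃ x y, G.Adj x y ∧ ¬T.Adj x y ∧ ∃ (p : T.Walk u x) (q : T.Walk y v),
      p.IsPath ∧ q.IsPath ∧ p.support.Disjoint q.support := by
  classical
  obtain ⟨P, hP⟩ := hT.connected.preconnected u v |>.some.toPath
  cases P with
  | nil => exact absurd rfl huv
  | @cons _ w _ huw r =>
    obtain ⟨-, hur⟩ := Walk.cons_isPath_iff _ _ |>.mp hP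
    set T' := T.deleteEdges {s(u, w)}
    have hwv : T'.Reachable w v := reachable_deleteEdges_iff_exists_walk.mpr
      ⟨r, fun h ↦ hur (r.fst_mem_support_of_mem_edges h)⟩
    have huw' : ¬T'.Reachable u w := isAcyclic_iff_forall_adj_isBridge.mp hT.isAcyclic huw
    obtain ⟨W, hW⟩ := reachable_deleteEdges_iff_exists_walk.mp <|
      not_not.mp <| isBridge_iff.not.mp (hG _ (hTG huw))
    obtain ⟨d, hd, hx, hy⟩ := W.exists_boundary_dart {z | T'.Reachable u z} .rfl huw'
    have hxyT : ¬T.Adj d.fst d.snd := fun h ↦ hy <| hx.trans <|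
      Adj.reachable <| deleteEdges_adj.mpr ⟨h, fun he ↦ hW (he ▸ List.mem_map_of_mem hd)⟩
    have hyv : T'.Reachable d.snd v :=
      (reachable_deleteEdges_or_reachable_deleteEdges
        (hT.connected.preconnected d.snd u).some).resolve_left (fun h ↦ hy h.symm) |>.trans hwv
    obtain ⟨p, hp⟩ := hx.some.toPath
    obtain ⟨q, hq⟩ := hyv.some.toPath
    refine ⟨d.fst, d.snd, d.adj, hxyT, p.mapLe (deleteEdges_le _), q.mapLe (deleteEdges_le _),
      hp.mapLe _, hq.mapLe _, ?_⟩
    simp only [Walk.support_mapLe_eq_support]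
    exact fun z hzp hzq ↦ hy ⟨(p.takeUntil z hzp).append (q.takeUntil z hzq).reverse⟩

lemma IsTree.isCFCColoring [DecidablePred (· ∈ T.edgeSet)] (hTG : T ≤ G) (hT : T.IsTree)
    (hG : ∀ e ∈ G.edgeSet, ¬G.IsBridge e) :
    IsCFCColoring G fun e ↦ if e ∈ T.edgeSet then 1 else 0 := by
  intro u v huv
  obtain ⟨x, y, hxy, hxyT, p, q, hp, hq, hpq⟩ := hT.exists_adj_not_adj_of_not_isBridge hTG hG huv
  refine ⟨(p.mapLe hTG).append (.cons hxy (q.mapLe hTG)), ?_, 0, ?_⟩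
  · simp only [Walk.isPath_def, Walk.support_append, Walk.support_cons, List.tail_cons,
      Walk.support_mapLe_eq_support]
    exact hp.support_nodup.append hq.support_nodup hpq
  · have htree {a b : V} (r : T.Walk a b) :
        (r.edges.map fun e ↦ if e ∈ T.edgeSet then 1 else 0).count 0 = 0 :=
      List.count_eq_zero.mpr <| by simp +contextual [r.edges_subset_edgeSet _]
    simp [List.count_append, hxyT, htree]

lemma two_le_of_isCFCColoring (hG : G ≠ ⊤) {c : Sym2 V → ℕ} {n : ℕ}
    (hc : ∀ e ∈ G.edgeSet, c e < n) (hcfc : IsCFCColoring G c) : 2 ≤ n := by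
  by_contra! hn
  obtain ⟨u, v, huv, hadj⟩ := ne_top_iff_exists_not_adj.mp hG
  obtain ⟨p, -, k, hk⟩ := hcfc u v huv
  have hmono : p.edges.map c = List.replicate p.length 0 := by
    refine List.eq_replicate_iff.mpr ⟨by simp, ?_⟩
    simp only [List.mem_map]
    rintro _ ⟨e, he, rfl⟩
    have := hc e (p.edges_subset_edgeSet he)
    omega
  rw [hmono, List.count_replicate] at hk
  split_ifs at hk
  exact hadj (Walk.adj_of_length_eq_one hk)

end SimpleGraph

theorem stmt_4_general {V : Type u} (G : SimpleGraph V) (hnc : G ≠ ⊤)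
    (hconn : G.Connected)
    (hbridge : ∀ e ∈ G.edgeSet, ¬ G.IsBridge e) :
    cfcNum G = 2 := by
  classical
  obtain ⟨T, hTG, hT⟩ := hconn.exists_isTree_le
  have hcolor : 2 ∈ {n | ∃ c : Sym2 V → ℕ, (∀ e ∈ G.edgeSet, c e < n) ∧ IsCFCColoring G c} :=
    ⟨_, fun e _ ↦ by split_ifs <;> omega, hT.isCFCColoring hTG hbridge⟩
  exact le_antisymm (Nat.sInf_le hcolor) <|
    le_csInf ⟨2, hcolor⟩ fun _ ⟨_, hc, hcfc⟩ ↦ two_le_of_isCFCColoring hnc hc hcfc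

/-- A noncomplete 2-edge-connected graph has cfc equal to 2. -/
theorem stmt_4 {V : Type u} [Fintype V] (G : SimpleGraph V) (hnc : G ≠ ⊤)
    (hconn : G.Connected) (hnt : Nontrivial V)
    (hbridge : ∀ e ∈ G.edgeSet, ¬ G.IsBridge e) :
    cfcNum G = 2 :=
  stmt_4_general G hnc hconn hbridge
end

section
/- Let u and v be two distinct vertices and let e be an edge of a 2-connected graph G. Then there is a path in G from u to v that contains the edge e. -/
open SimpleGraph

universe u

/-!
Fix the edge `xy`. Every vertex `v` lies on an `x`–`y` path: walk from `v` to `x` and induct. If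
the next vertex `m` of the walk lies on an `x`–`y` path `P` but `v` does not, a path from `v` to
`P` in `G - m` first meets `P` at some `z ≠ m`, and replacing the segment of `P` between `m` and
`z` by `m v ⋯ z` gives an `x`–`y` path through `v`.

Given `u ≠ v`, take an `x`–`y` path `P` through `v` and a path from `u` to `P` in `G - v`, first
meeting `P` at `z ≠ v`. From `z`, follow `P` away from `v` to an end of `xy`, cross `xy`, and
follow `P` back to `v`.
-/

namespace SimpleGraph

variable {V : Type u} {G : SimpleGraph V}

namespace Walk

theorem isPath_append_iff {a b c : V} {p : G.Walk a b} {q : G.Walk b c} :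
    (p.append q).IsPath ↔ p.IsPath ∧ q.IsPath ∧ ∀ w ∈ p.support, w ∈ q.support → w = b := by
  have hb := p.end_mem_support
  rw [isPath_def, isPath_def, isPath_def, support_append, List.nodup_append',
    ← q.cons_tail_support, List.nodup_cons, List.tail_cons, List.disjoint_left]
  grind

theorem exists_isPath_first_mem {S : Set V} {a b : V} (W : G.Walk a b) (hb : b ∈ S) :
    ∃ z ∈ S, ∃ Q : G.Walk a z, Q.IsPath ∧ Q.support ⊆ W.support ∧
      ∀ w ∈ Q.support, w ∈ S → w = z := by
  classical
  induction W with
  | nil => exact ⟨_, hb, nil, .nil, by simp, by simp⟩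
  | @cons a c b h W ih =>
    by_cases ha : a ∈ S
    · exact ⟨a, ha, nil, .nil, by simp, by simp⟩
    obtain ⟨z, hz, Q, -, hQW, hQS⟩ := ih hb
    have hsub := (cons h Q).support_bypass_subset_support
    refine ⟨z, hz, (cons h Q).bypass, bypass_isPath _, ?_, ?_⟩ <;> grind [support_cons]

theorem exists_eq_append_append_or {x y a b : V} {P : G.Walk x y} (ha : a ∈ P.support)
    (hb : b ∈ P.support) :
    (∃ (A : G.Walk x a) (B : G.Walk a b) (C : G.Walk b y), P = A.append (B.append C)) ∨
      ∃ (A : G.Walk y a) (B : G.Walk a b) (C : G.Walk b x),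
        P.reverse = A.append (B.append C) := by
  obtain ⟨A, R, rfl⟩ := P.mem_support_iff_exists_append.mp ha
  rcases (mem_support_append_iff _ _).mp hb with hb | hb
  · obtain ⟨C, B, rfl⟩ := A.mem_support_iff_exists_append.mp hb
    exact Or.inr ⟨R.reverse, B.reverse, C.reverse, by simp [reverse_append]⟩
  · obtain ⟨B, C, rfl⟩ := R.mem_support_iff_exists_append.mp hb
    exact Or.inl ⟨A, B, C, rfl⟩

theorem exists_isPath_edge_mem_of_eq_append {x y v z : V} (hxy : G.Adj x y)
    {P : G.Walk x y} (hP : P.IsPath) {A : G.Walk x v} {B : G.Walk v z} {C : G.Walk z y}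
    (hABC : P = A.append (B.append C)) (hzv : z ≠ v) :
    ∃ W : G.Walk z v, W.IsPath ∧ s(x, y) ∈ W.edges ∧ W.support ⊆ P.support := by
  subst hABC
  obtain ⟨hA, hBC, hA_BC⟩ := isPath_append_iff.mp hP
  obtain ⟨hB, hC, hB_C⟩ := isPath_append_iff.mp hBC
  refine ⟨C.append (cons hxy.symm A), ?_, by simp [edges_append, Sym2.eq_swap], ?_⟩
  · rw [isPath_append_iff, cons_isPath_iff]
    grind [mem_support_append_iff, support_cons, start_mem_support, end_mem_support]
  · grind [mem_support_append_iff, support_cons, start_mem_support, end_mem_support]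

theorem IsPath.exists_isPath_edge_mem {x y v z : V} (hxy : G.Adj x y) {P : G.Walk x y}
    (hP : P.IsPath) (hv : v ∈ P.support) (hz : z ∈ P.support) (hzv : z ≠ v) :
    ∃ W : G.Walk z v, W.IsPath ∧ s(x, y) ∈ W.edges ∧ W.support ⊆ P.support := by
  rcases exists_eq_append_append_or hv hz with ⟨A, B, C, h⟩ | ⟨A, B, C, h⟩
  · exact exists_isPath_edge_mem_of_eq_append hxy hP h hzv
  · simpa [Sym2.eq_swap] using exists_isPath_edge_mem_of_eq_append hxy.symm hP.reverse h hzv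

theorem exists_isPath_mem_support_of_eq_append {x y m z v : V} (hvm : G.Adj v m)
    {P : G.Walk x y} (hP : P.IsPath) {A : G.Walk x m} {B : G.Walk m z} {C : G.Walk z y}
    (hABC : P = A.append (B.append C)) (hzm : z ≠ m) {Q : G.Walk v z} (hQ : Q.IsPath)
    (hQP : ∀ w ∈ Q.support, w ∈ P.support → w = z) :
    ∃ P' : G.Walk x y, P'.IsPath ∧ v ∈ P'.support := by
  subst hABC
  obtain ⟨hA, hBC, hA_BC⟩ := isPath_append_iff.mp hP
  obtain ⟨hB, hC, hB_C⟩ := isPath_append_iff.mp hBC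
  refine ⟨A.append (cons hvm.symm (Q.append C)), ?_, by simp⟩
  rw [isPath_append_iff, cons_isPath_iff, isPath_append_iff]
  grind [mem_support_append_iff, support_cons, start_mem_support, end_mem_support]

theorem IsPath.exists_isPath_mem_support_of_adj {x y m z v : V} {P : G.Walk x y}
    (hP : P.IsPath) (hm : m ∈ P.support) (hvm : G.Adj v m) (hz : z ∈ P.support) (hzm : z ≠ m)
    {Q : G.Walk v z} (hQ : Q.IsPath) (hQP : ∀ w ∈ Q.support, w ∈ P.support → w = z) :
    ∃ P' : G.Walk x y, P'.IsPath ∧ v ∈ P'.support := by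
  rcases exists_eq_append_append_or hm hz with ⟨A, B, C, h⟩ | ⟨A, B, C, h⟩
  · exact exists_isPath_mem_support_of_eq_append hvm hP h hzm hQ hQP
  · obtain ⟨P', hP', hv⟩ :=
      exists_isPath_mem_support_of_eq_append hvm hP.reverse h hzm hQ (by simpa using hQP)
    exact ⟨P'.reverse, hP'.reverse, by simpa using hv⟩

end Walk

open Walk

theorem exists_walk_not_mem_support {m a b : V} (hm : (G.induce {w | w ≠ m}).Preconnected)
    (ha : a ≠ m) (hb : b ≠ m) : ∃ W : G.Walk a b, m ∉ W.support := by
  obtain ⟨W⟩ := hm ⟨a, ha⟩ ⟨b, hb⟩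
  refine ⟨W.map (Embedding.induce _).toHom, fun h => ?_⟩
  obtain ⟨⟨w, hw⟩, -, hwm⟩ := List.mem_map.mp ((W.support_map _).symm ▸ h)
  exact hw hwm

theorem exists_isPath_to_support {m a x y : V} (hm : (G.induce {w | w ≠ m}).Preconnected)
    (P : G.Walk x y) (hxy : x ≠ y) (ha : a ≠ m) :
    ∃ z ∈ P.support, z ≠ m ∧ ∃ Q : G.Walk a z, Q.IsPath ∧
      ∀ w ∈ Q.support, w ∈ P.support → w = z := by
  obtain ⟨t, htP, htm⟩ : ∃ t ∈ P.support, t ≠ m := by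
    by_cases hxm : x = m
    · exact ⟨y, P.end_mem_support, hxm ▸ hxy.symm⟩
    · exact ⟨x, P.start_mem_support, hxm⟩
  obtain ⟨W, hW⟩ := exists_walk_not_mem_support hm ha htm
  obtain ⟨z, hz, Q, hQ, hQW, hQP⟩ := W.exists_isPath_first_mem (S := {w | w ∈ P.support}) htP
  exact ⟨z, hz, fun h => hW (h ▸ hQW Q.end_mem_support), Q, hQ, hQP⟩

theorem exists_isPath_mem_support (hG : ∀ m, (G.induce {w | w ≠ m}).Preconnected)
    {x y : V} (hxy : G.Adj x y) (v : V) : ∃ P : G.Walk x y, P.IsPath ∧ v ∈ P.support := by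
  obtain ⟨W⟩ : G.Reachable v x := by
    by_cases hvy : v = y
    · exact hvy ▸ hxy.symm.reachable
    · obtain ⟨W, -⟩ := exists_walk_not_mem_support (hG y) hvy hxy.ne
      exact ⟨W⟩
  induction W with
  | nil => exact ⟨hxy.toWalk, .of_adj hxy, by simp⟩
  | @cons v m _ hvm W ih =>
    obtain ⟨P, hP, hm⟩ := ih hxy
    obtain ⟨z, hz, hzm, Q, hQ, hQP⟩ := exists_isPath_to_support (hG m) P hxy.ne hvm.ne
    exact hP.exists_isPath_mem_support_of_adj hm hvm hz hzm hQ hQP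

end SimpleGraph

theorem stmt_5_general {V : Type u} (G : SimpleGraph V)
    (h2c : ∀ v : V, (G.induce {w | w ≠ v}).Connected)
    (u v : V) (huv : u ≠ v) (e : Sym2 V) (he : e ∈ G.edgeSet) :
    ∃ p : G.Walk u v, p.IsPath ∧ e ∈ p.edges := by
  induction e using Sym2.ind with | _ x y => ?_
  have hxy : G.Adj x y := he
  obtain ⟨P, hP, hv⟩ := exists_isPath_mem_support (fun m => (h2c m).preconnected) hxy v
  obtain ⟨z, hz, hzv, Q, hQ, hQP⟩ := exists_isPath_to_support (h2c v).preconnected P hxy.ne huv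
  obtain ⟨W, hW, heW, hWP⟩ := hP.exists_isPath_edge_mem hxy hv hz hzv
  exact ⟨Q.append W, Walk.isPath_append_iff.mpr ⟨hQ, hW, fun w hwQ hwW => hQP w hwQ (hWP hwW)⟩,
    by simp [Walk.edges_append, heW]⟩

/-- In a 2-connected graph, any two distinct vertices are joined by a path through
any prescribed edge. -/
theorem stmt_5 {V : Type u} [Fintype V] (G : SimpleGraph V)
    (hcard : 3 ≤ Fintype.card V)
    (h2c : ∀ v : V, (G.induce {w | w ≠ v}).Connected)
    (u v : V) (huv : u ≠ v) (e : Sym2 V) (he : e ∈ G.edgeSet) :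
    ∃ p : G.Walk u v, p.IsPath ∧ e ∈ p.edges :=
  stmt_5_general G h2c u v huv e he
end

section
/- Let G be a connected graph. Then from each nontrivial block of G one can choose an edge such that the set of all chosen edges forms a matching in G. -/
open SimpleGraph

universe u

/-!
Fix a root `r`. In every nontrivial block `B` pick a vertex `p B` nearest to `r`, and an edge of
`B - p B`, which exists because `B - p B` is connected and has at least two vertices. Suppose two
distinct blocks `B₁`, `B₂` had chosen edges through a common vertex `x`. Then `x ≠ p Bᵢ` and
`p Bᵢ` is no farther from `r` than `x`, so shortest paths from `r` to `p B₁` and `p B₂` avoid `x`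
and combine into a path `q` from `B₁` to `B₂` avoiding `x`. Deleting any vertex from
`B₁ ∪ B₂ ∪ q` leaves it connected, so this set contradicts the maximality of `B₁`.
-/

section

variable {V : Type u} {G : SimpleGraph V}

lemma SimpleGraph.Walk.IsPath.exists_walk_avoiding {a b v z : V} {q : G.Walk a b}
    (hq : q.IsPath) (hv : v ∈ q.support) (hzv : z ≠ v) :
    (∃ w : G.Walk v a, z ∉ w.support ∧ w.support ⊆ q.support) ∨
      (∃ w : G.Walk v b, z ∉ w.support ∧ w.support ⊆ q.support) := by
  classical
  have hnd : ((q.takeUntil v hv).append (q.dropUntil v hv)).support.Nodup := by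
    rw [q.take_spec hv]
    exact hq.support_nodup
  rw [Walk.support_append] at hnd
  by_cases hz : z ∈ (q.takeUntil v hv).support
  · refine .inr ⟨q.dropUntil v hv, fun hz' => ?_, q.support_dropUntil_subset_support hv⟩
    rw [← Walk.cons_tail_support (q.dropUntil v hv)] at hz'
    exact List.disjoint_of_nodup_append hnd hz ((List.mem_cons.mp hz').resolve_left hzv)
  · refine .inl ⟨(q.takeUntil v hv).reverse, by simpa using hz, fun y hy => ?_⟩
    rw [Walk.support_reverse, List.mem_reverse] at hy
    exact q.support_takeUntil_subset_support hv hy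

lemma SimpleGraph.Walk.notMem_support_of_length_eq_dist {r p x : V} {w : G.Walk r p}
    (hw : w.length = G.dist r p) (hxp : x ≠ p) (hd : G.dist r p ≤ G.dist r x) :
    x ∉ w.support := by
  classical
  intro hx
  have h₁ := dist_le (w.takeUntil x hx)
  have h₂ := w.length_takeUntil_lt_length hx hxp
  omega

lemma SimpleGraph.connected_induce_of_forall_walk {C U : Set V} (hC : (G.induce C).Connected)
    (hCU : C ⊆ U)
    (h : ∀ v ∈ U, ∃ c ∈ C, ∃ w : G.Walk v c, ∀ y ∈ w.support, y ∈ U) :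
    (G.induce U).Connected := by
  obtain ⟨c₀⟩ := hC.nonempty
  refine induce_connected_of_patches c₀ (hCU c₀.2) fun {v} hv => ?_
  obtain ⟨c, hc, w, hwU⟩ := h v hv
  refine ⟨C ∪ {y | y ∈ w.support}, Set.union_subset hCU hwU, .inl c₀.2,
    .inr w.start_mem_support, ?_⟩
  exact (induce_union_connected hC.preconnected w.connected_induce_support.preconnected
    ⟨c, hc, w.end_mem_support⟩).preconnected _ _

lemma SimpleGraph.exists_adj_of_connected_induce {S : Set V} (hC : (G.induce S).Connected)
    (hS : S.Nontrivial) : ∃ a ∈ S, ∃ b ∈ S, G.Adj a b := by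
  have : Nontrivial S := Set.nontrivial_coe_sort.mpr hS
  obtain ⟨v⟩ := hC.nonempty
  obtain ⟨w, hvw⟩ := hC.preconnected.exists_adj_of_nontrivial v
  exact ⟨v, v.2, w, w.2, hvw⟩

def SimpleGraph.induceInduceNeIso {S : Set V} (v : S) :
    (G.induce S).induce {w | w ≠ v} ≃g G.induce (S \ {(v : V)}) where
  toFun w := ⟨w.1.1, w.1.2, fun h => w.2 (Subtype.ext h)⟩
  invFun w := ⟨⟨w.1, w.2.1⟩, fun h => w.2.2 (congrArg Subtype.val h)⟩
  left_inv _ := rfl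
  right_inv _ := rfl
  map_rel_iff' := Iff.rfl

lemma noCutVertex_induce_iff {S : Set V} :
    NoCutVertex (G.induce S) ↔ ∀ z ∈ S, (G.induce (S \ {z})).Connected :=
  ⟨fun h z hz => (induceInduceNeIso ⟨z, hz⟩).connected_iff.mp (h ⟨z, hz⟩),
    fun h v => (induceInduceNeIso v).connected_iff.mpr (h v v.2)⟩

lemma NoCutVertex.connected_induce_diff {S : Set V} (hN : NoCutVertex (G.induce S))
    (hC : (G.induce S).Connected) (z : V) : (G.induce (S \ {z})).Connected := by
  by_cases hz : z ∈ S
  · exact noCutVertex_induce_iff.mp hN z hz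
  · rwa [Set.sdiff_singleton_eq_self hz]

lemma NoCutVertex.exists_edge_avoiding {S : Set V} (hN : NoCutVertex (G.induce S))
    (hC : (G.induce S).Connected) (hS : 3 ≤ S.ncard) (p : V) :
    ∃ e ∈ G.edgeSet, ∀ v ∈ e, v ∈ S ∧ v ≠ p := by
  have hcard := Set.pred_ncard_le_ncard_sdiff_singleton S p
  have hS' : (S \ {p}).Nontrivial :=
    (Set.one_lt_ncard_iff_nontrivial_and_finite.mp (by omega)).1
  obtain ⟨a, ha, b, hb, hab⟩ := exists_adj_of_connected_induce (hN.connected_induce_diff hC p) hS'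
  refine ⟨s(a, b), hab, fun v hv => ?_⟩
  rcases Sym2.mem_iff.mp hv with rfl | rfl
  exacts [ha, hb]

section Gluing

variable {S T : Set V} {x a b : V} {q : G.Walk a b}

lemma connected_induce_union_union_support (hSC : (G.induce S).Connected)
    (hTC : (G.induce T).Connected) (hxS : x ∈ S) (hxT : x ∈ T) (ha : a ∈ S) :
    (G.induce (S ∪ T ∪ {v | v ∈ q.support})).Connected :=
  induce_union_connected (induce_union_connected hSC.preconnected hTC.preconnected
    ⟨x, hxS, hxT⟩).preconnected q.connected_induce_support.preconnected
    ⟨a, .inl ha, q.start_mem_support⟩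

lemma noCutVertex_induce_union_union_support (hSC : (G.induce S).Connected)
    (hSN : NoCutVertex (G.induce S)) (hTC : (G.induce T).Connected)
    (hTN : NoCutVertex (G.induce T)) (hxS : x ∈ S) (hxT : x ∈ T) (ha : a ∈ S) (hb : b ∈ T)
    (hq : q.IsPath) (hxq : x ∉ q.support) :
    NoCutVertex (G.induce (S ∪ T ∪ {v | v ∈ q.support})) := by
  refine noCutVertex_induce_iff.mpr fun z _ => ?_
  have hSz := hSN.connected_induce_diff hSC z
  have hTz := hTN.connected_induce_diff hTC z
  rcases eq_or_ne x z with rfl | hxz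
  · -- `q` avoids `x`, so it still joins `S \ {x}` to `T \ {x}`
    have hax : a ≠ x := ne_of_mem_of_not_mem q.start_mem_support hxq
    have hbx : b ≠ x := ne_of_mem_of_not_mem q.end_mem_support hxq
    rw [Set.union_sdiff_distrib, Set.union_sdiff_distrib,
      Set.sdiff_singleton_eq_self (s := {v | v ∈ q.support}) hxq, Set.union_right_comm]
    exact induce_union_connected (induce_union_connected hSz.preconnected
      q.connected_induce_support.preconnected ⟨a, ⟨ha, hax⟩, q.start_mem_support⟩).preconnected
      hTz.preconnected ⟨b, .inr q.end_mem_support, hb, hbx⟩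
  · -- `S \ {z}` and `T \ {z}` still meet in `x`, and every vertex of `q` other than `z`
    -- reaches an end of `q` along `q` without passing through `z`
    have hCz : (G.induce (S \ {z} ∪ T \ {z})).Connected := induce_union_connected
      hSz.preconnected hTz.preconnected ⟨x, ⟨hxS, hxz⟩, hxT, hxz⟩
    refine connected_induce_of_forall_walk hCz (Set.union_subset
      (Set.sdiff_subset_sdiff_left (Set.subset_union_left.trans Set.subset_union_left))
      (Set.sdiff_subset_sdiff_left (Set.subset_union_right.trans Set.subset_union_left))) ?_
    rintro v ⟨(hv | hv) | hv, hvz⟩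
    · exact ⟨v, .inl ⟨hv, hvz⟩, .nil, by simp_all⟩
    · exact ⟨v, .inr ⟨hv, hvz⟩, .nil, by simp_all⟩
    · rcases hq.exists_walk_avoiding hv (Ne.symm hvz) with ⟨w, hzw, hwq⟩ | ⟨w, hzw, hwq⟩
      · exact ⟨a, .inl ⟨ha, ne_of_mem_of_not_mem w.end_mem_support hzw⟩, w,
          fun y hy => ⟨.inr (hwq hy), ne_of_mem_of_not_mem hy hzw⟩⟩
      · exact ⟨b, .inr ⟨hb, ne_of_mem_of_not_mem w.end_mem_support hzw⟩, w,
          fun y hy => ⟨.inr (hwq hy), ne_of_mem_of_not_mem hy hzw⟩⟩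

end Gluing

namespace IsBlock

variable {B₁ B₂ : Set V}

lemma eq_of_subset (h₁ : IsBlock G B₁) (h₂ : IsBlock G B₂) (h : B₁ ⊆ B₂) : B₁ = B₂ :=
  (h₁.2.2 B₂ h h₂.1 h₂.2.1).symm

lemma eq_of_isPath_notMem (h₁ : IsBlock G B₁) (h₂ : IsBlock G B₂) {x a b : V}
    (hx₁ : x ∈ B₁) (hx₂ : x ∈ B₂) (ha : a ∈ B₁) (hb : b ∈ B₂) {q : G.Walk a b} (hq : q.IsPath)
    (hxq : x ∉ q.support) : B₁ = B₂ := by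
  have hU : B₁ ∪ B₂ ∪ {v | v ∈ q.support} = B₁ := h₁.2.2 _
    (Set.subset_union_left.trans Set.subset_union_left)
    (connected_induce_union_union_support h₁.1 h₂.1 hx₁ hx₂ ha)
    (noCutVertex_induce_union_union_support h₁.1 h₁.2.1 h₂.1 h₂.2.1 hx₁ hx₂ ha hb hq hxq)
  exact (h₂.eq_of_subset h₁ fun v hv => hU ▸ .inl (.inr hv)).symm

lemma eq_of_dist_le (hconn : G.Connected) (h₁ : IsBlock G B₁) (h₂ : IsBlock G B₂)
    {r x p₁ p₂ : V} (hx₁ : x ∈ B₁) (hx₂ : x ∈ B₂) (hp₁ : p₁ ∈ B₁) (hp₂ : p₂ ∈ B₂)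
    (hxp₁ : x ≠ p₁) (hxp₂ : x ≠ p₂) (hd₁ : G.dist r p₁ ≤ G.dist r x)
    (hd₂ : G.dist r p₂ ≤ G.dist r x) : B₁ = B₂ := by
  classical
  obtain ⟨w₁, hw₁⟩ := hconn.exists_walk_length_eq_dist r p₁
  obtain ⟨w₂, hw₂⟩ := hconn.exists_walk_length_eq_dist r p₂
  have hx : x ∉ (w₁.reverse.append w₂).support := by
    rw [Walk.mem_support_append_iff, Walk.support_reverse, List.mem_reverse, not_or]
    exact ⟨w₁.notMem_support_of_length_eq_dist hw₁ hxp₁ hd₁,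
      w₂.notMem_support_of_length_eq_dist hw₂ hxp₂ hd₂⟩
  exact h₁.eq_of_isPath_notMem h₂ hx₁ hx₂ hp₁ hp₂ (Walk.bypass_isPath _)
    fun h => hx (Walk.support_bypass_subset_support _ h)

end IsBlock

end

theorem stmt_6_general {V : Type u} (G : SimpleGraph V) (hconn : G.Connected) :
    ∃ f : Set V → Sym2 V,
      (∀ B : Set V, IsBlock G B → 3 ≤ B.ncard →
        f B ∈ G.edgeSet ∧ ∀ x ∈ f B, x ∈ B) ∧
      (∀ B₁ B₂ : Set V, IsBlock G B₁ → 3 ≤ B₁.ncard → IsBlock G B₂ → 3 ≤ B₂.ncard →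
        B₁ ≠ B₂ → ∀ x : V, x ∈ f B₁ → x ∉ f B₂) := by
  obtain ⟨r⟩ := hconn.nonempty
  have : Nonempty V := ⟨r⟩
  have : Nonempty (Sym2 V) := ⟨s(r, r)⟩
  have hnearest : ∀ B : Set V, B.Nonempty → ∃ p ∈ B, ∀ v ∈ B, G.dist r p ≤ G.dist r v :=
    fun B hB => ⟨_, Function.argminOn_mem _ B hB, fun _ hv => Function.argminOn_le _ B hv⟩
  choose! p hpB hp using hnearest
  have hedge (B : Set V) (hB : IsBlock G B) (hcard : 3 ≤ B.ncard) :
      ∃ e ∈ G.edgeSet, ∀ v ∈ e, v ∈ B ∧ v ≠ p B :=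
    hB.2.1.exists_edge_avoiding hB.1 hcard (p B)
  choose! f hfG hfB using hedge
  refine ⟨f, fun B hB hcard => ⟨hfG B hB hcard, fun v hv => (hfB B hB hcard v hv).1⟩, ?_⟩
  intro B₁ B₂ h₁ hc₁ h₂ hc₂ hne x hx₁ hx₂
  obtain ⟨hxB₁, hxp₁⟩ := hfB B₁ h₁ hc₁ x hx₁
  obtain ⟨hxB₂, hxp₂⟩ := hfB B₂ h₂ hc₂ x hx₂
  exact hne (h₁.eq_of_dist_le hconn h₂ hxB₁ hxB₂ (hpB B₁ ⟨x, hxB₁⟩) (hpB B₂ ⟨x, hxB₂⟩) hxp₁ hxp₂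
    (hp B₁ ⟨x, hxB₁⟩ x hxB₁) (hp B₂ ⟨x, hxB₂⟩ x hxB₂))

/-- From each nontrivial block of a connected graph one can choose an edge so that
the chosen edges form a matching. -/
theorem stmt_6 {V : Type u} [Fintype V] (G : SimpleGraph V) (hconn : G.Connected) :
    ∃ f : Set V → Sym2 V,
      (∀ B : Set V, IsBlock G B → 3 ≤ B.ncard →
        f B ∈ G.edgeSet ∧ ∀ x ∈ f B, x ∈ B) ∧
      (∀ B₁ B₂ : Set V, IsBlock G B₁ → 3 ≤ B₁.ncard → IsBlock G B₂ → 3 ≤ B₂.ncard →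
        B₁ ≠ B₂ → ∀ x : V, x ∈ f B₁ → x ∉ f B₂) :=
  stmt_6_general G hconn
end

section
/- If G is a connected claw-free graph, then the subgraph C(G) of G induced by the set of cut-edges of G is a linear forest (a disjoint union of paths), and moreover every internal vertex of each path component of C(G) has degree 2 in G. -/
open SimpleGraph

universe u

/-!
A bridge lies on no cycle. Hence `C(G) ⊆ G` is acyclic, and since a bridge lies on no triangle,
the far ends of two bridges at `v` are non-adjacent to each other and to every other neighbour
of `v`; claw-freeness then forbids a third neighbour of `v` in `G`.
-/

namespace SimpleGraph

variable {V : Type u} {G : SimpleGraph V} {u v a b : V}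

lemma cutG_adj : (cutG G).Adj u v ↔ G.IsBridge s(u, v) := by
  rw [cutG, fromEdgeSet_adj, Set.mem_ofPred_eq, and_iff_left_iff_imp]
  rintro h rfl
  exact isBridge_iff.mp h (Reachable.refl _)

lemma Connected.adj_of_isBridge (hG : G.Connected) (h : G.IsBridge s(u, v)) : G.Adj u v :=
  h.reachable_iff_adj.mp (hG u v)

lemma Connected.cutG_le (hG : G.Connected) : cutG G ≤ G :=
  fun _ _ h ↦ hG.adj_of_isBridge (cutG_adj.mp h)

lemma IsBridge.not_adj_of_adj (h : G.IsBridge s(v, a)) (hvb : G.Adj v b) : ¬G.Adj a b := by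
  intro hab
  have hmem := isBridge_iff_forall_walk_mem_edges.mp h (.cons hvb (.cons hab.symm .nil))
  simp only [Walk.edges_cons, Walk.edges_nil, List.mem_cons, List.not_mem_nil, or_false,
    Sym2.eq_iff] at hmem
  grind [hvb.ne, hab.ne]

lemma isAcyclic_cutG (hG : G.Connected) : (cutG G).IsAcyclic := by
  rintro v (_ | ⟨hvw, q⟩) hp
  · exact hp.ne_nil rfl
  · refine (cutG_adj.mp hvw).notMem_edges_of_isCycle (hp.mapLe hG.cutG_le) ?_
    simp

lemma ClawFree.neighborSet_eq_of_cutG_adj (hcf : ClawFree G) (hG : G.Connected)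
    (ha : (cutG G).Adj v a) (hb : (cutG G).Adj v b) (hab : a ≠ b) :
    G.neighborSet v = {a, b} := by
  have hva := cutG_adj.mp ha
  have hvb := cutG_adj.mp hb
  refine subset_antisymm (fun c hvc ↦ ?_) (Set.insert_subset (hG.cutG_le ha) <|
    Set.singleton_subset_iff.mpr (hG.cutG_le hb))
  by_contra hc
  simp only [Set.mem_insert_iff, Set.mem_singleton_iff, not_or] at hc
  exact hcf v a b c (hG.adj_of_isBridge hva) (hG.adj_of_isBridge hvb) hvc hab (Ne.symm hc.1)
    (Ne.symm hc.2) (hva.not_adj_of_adj (hG.adj_of_isBridge hvb)) (hva.not_adj_of_adj hvc)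
    (hvb.not_adj_of_adj hvc)

lemma ClawFree.ncard_cutG_neighborSet_le_two (hcf : ClawFree G) (hG : G.Connected) (v : V) :
    ((cutG G).neighborSet v).ncard ≤ 2 := by
  rcases ((cutG G).neighborSet v).subsingleton_or_nontrivial with hs | ⟨a, ha, b, hb, hab⟩
  · exact ((Set.ncard_le_one hs.finite).mpr hs).trans one_le_two
  · have hsub : (cutG G).neighborSet v ⊆ {a, b} :=
      hcf.neighborSet_eq_of_cutG_adj hG ha hb hab ▸ fun _ ↦ (hG.cutG_le ·)
    exact (Set.ncard_le_ncard hsub).trans_eq (Set.ncard_pair hab)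

lemma ClawFree.ncard_neighborSet_eq_two (hcf : ClawFree G) (hG : G.Connected)
    (h : ((cutG G).neighborSet v).ncard = 2) : (G.neighborSet v).ncard = 2 := by
  obtain ⟨a, b, hab, hs⟩ := Set.ncard_eq_two.mp h
  have ha : (cutG G).Adj v a := by simp [← mem_neighborSet, hs]
  have hb : (cutG G).Adj v b := by simp [← mem_neighborSet, hs]
  rw [hcf.neighborSet_eq_of_cutG_adj hG ha hb hab, Set.ncard_pair hab]

end SimpleGraph

theorem stmt_7_general {V : Type u} (G : SimpleGraph V) (hconn : G.Connected)
    (hcf : ClawFree G) :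
    (cutG G).IsAcyclic ∧ (∀ v : V, ((cutG G).neighborSet v).ncard ≤ 2) ∧
      ∀ v : V, ((cutG G).neighborSet v).ncard = 2 → (G.neighborSet v).ncard = 2 :=
  ⟨isAcyclic_cutG hconn, hcf.ncard_cutG_neighborSet_le_two hconn,
    fun _ ↦ hcf.ncard_neighborSet_eq_two hconn⟩

/-- For a connected claw-free graph, the cut-edge subgraph is a linear forest whose
internal (degree-2) vertices have degree 2 in G. -/
theorem stmt_7 {V : Type u} [Fintype V] (G : SimpleGraph V) (hconn : G.Connected)
    (hcf : ClawFree G) :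
    (cutG G).IsAcyclic ∧ (∀ v : V, ((cutG G).neighborSet v).ncard ≤ 2) ∧
      ∀ v : V, ((cutG G).neighborSet v).ncard = 2 → (G.neighborSet v).ncard = 2 :=
  stmt_7_general G hconn hcf
end

section
/- Let G be a star K_{1,r} with r ≥ 4, and let k ≥ 2 be an integer. Then cfc(L^{k+1}(G)) = cfc(L^k(G)) = 2. -/
open SimpleGraph

universe u

/-!
A graph with a Hamiltonian cycle `v 0, …, v (n - 1)` has a conflict-free colouring with two
colours: colour the closing edge `v (n - 1) v 0` with `1` and every other edge with `0`. Any two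
vertices are joined by an arc of the cycle through that edge, and on this path colour `1` occurs
exactly once. If the graph also has two distinct non-adjacent vertices, one colour is not enough,
so `cfc = 2`.

`L(K_{1,r}) = K_r` is Hamiltonian, and the line graph of a Hamiltonian graph is Hamiltonian: going
around the cycle, list at each `v i` first the chords `v i v b` with `b > i + 1`, then the cycle
edge `v i v (i + 1)`. Consecutive edges of this list share a vertex, and so do the last and the
first. Hence every `L^k(K_{1,r})` with `k ≥ 1` is Hamiltonian. For `k ≥ 2` the graph `L^k` is the
line graph of a Hamiltonian graph on at least four vertices, whose disjoint edges `v 0 v 1` and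
`v 2 v 3` are non-adjacent vertices of `L^k`.
-/

theorem Nat.mod_ne_add_one_mod {m : ℕ} (hm : 2 ≤ m) (t : ℕ) : t % m ≠ (t + 1) % m := fun h => by
  have h01 : 0 ≡ 1 [MOD m] := Nat.ModEq.add_left_cancel' t h
  rw [Nat.ModEq, Nat.zero_mod, Nat.mod_eq_of_lt hm] at h01
  exact zero_ne_one h01

theorem List.IsChain.rel_getElem_mod {α : Type*} {R : α → α → Prop} {l : List α} (hl : l ≠ [])
    (hc : l.IsChain R) (hw : ∀ x ∈ l.getLast?, ∀ y ∈ l.head?, R x y) (t : ℕ) :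
    R (l[t % l.length]'(Nat.mod_lt _ (List.length_pos_iff.2 hl)))
      (l[(t + 1) % l.length]'(Nat.mod_lt _ (List.length_pos_iff.2 hl))) := by
  have hm := List.length_pos_iff.2 hl
  have hlt := Nat.mod_lt t hm
  simp only [← Nat.mod_add_mod t l.length 1]
  rcases Nat.lt_or_ge (t % l.length + 1) l.length with hsucc | hsucc
  · simp only [Nat.mod_eq_of_lt hsucc]
    exact List.isChain_iff_getElem.1 hc _ hsucc
  · have hlast : t % l.length = l.length - 1 := by omega
    simp only [hlast, Nat.sub_add_cancel hm, Nat.mod_self]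
    exact hw _ (by simp [List.getLast?_eq_getElem?]) _ (by simp [List.head?_eq_getElem?])

section ConflictFree

variable {V : Type u} {G : SimpleGraph V}

theorem two_le_of_isCFCColoring_s16 {c : Sym2 V → ℕ} {m : ℕ} (hc : ∀ e ∈ G.edgeSet, c e < m)
    (hcfc : IsCFCColoring G c) {x y : V} (hxy : x ≠ y) (hnadj : ¬G.Adj x y) : 2 ≤ m := by
  obtain ⟨p, -, col, hcol⟩ := hcfc x y hxy
  have hlen : 2 ≤ p.length := by
    by_contra! hlt
    interval_cases hp : p.length
    · exact hxy (p.eq_of_length_eq_zero hp)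
    · exact hnadj (p.adj_of_length_eq_one hp)
  obtain ⟨e, he, rfl⟩ := List.mem_map.1 (List.count_pos_iff.1 (hcol ▸ Nat.one_pos))
  by_contra! hm
  have hconst : ∀ c' ∈ p.edges.map c, c e = c' := by
    intro c' hc'
    obtain ⟨e', he', rfl⟩ := List.mem_map.1 hc'
    have := hc e (p.edges_subset_edgeSet he)
    have := hc e' (p.edges_subset_edgeSet he')
    omega
  rw [List.count_eq_length.2 hconst, List.length_map, p.length_edges] at hcol
  omega

theorem cfcNum_eq_two
    (hc : ∃ c : Sym2 V → ℕ, (∀ e ∈ G.edgeSet, c e < 2) ∧ IsCFCColoring G c)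
    {x y : V} (hxy : x ≠ y) (hnadj : ¬G.Adj x y) : cfcNum G = 2 :=
  le_antisymm (Nat.sInf_le hc) <| le_csInf ⟨2, hc⟩ fun _ ⟨_, hlt, hcfc⟩ =>
    two_le_of_isCFCColoring_s16 hlt hcfc hxy hnadj

open Classical in
theorem isCFCColoring_ite_eq (e : Sym2 V)
    (h : ∀ x y, x ≠ y → ∃ p : G.Walk x y, p.IsPath ∧ e ∈ p.edges) :
    IsCFCColoring G fun e' => if e' = e then 1 else 0 := by
  intro x y hxy
  obtain ⟨p, hp, he⟩ := h x y hxy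
  refine ⟨p, hp, 1, Eq.trans ?_ (List.count_eq_one_of_mem hp.edges_nodup he)⟩
  simp only [List.count_eq_countP, List.countP_map]
  congr 1
  funext e'
  by_cases h : e' = e <;> simp [h]

def walkAlong {v : ℕ → V} (hv : ∀ i, G.Adj (v i) (v (i + 1))) (a : ℕ) :
    (d : ℕ) → G.Walk (v a) (v (a + d))
  | 0 => .nil
  | d + 1 => (walkAlong hv a d).concat (hv (a + d))

section walkAlong

variable {v : ℕ → V} (hv : ∀ i, G.Adj (v i) (v (i + 1))) (a d : ℕ)

theorem support_walkAlong :
    (walkAlong hv a d).support = (List.range (d + 1)).map fun t => v (a + t) := by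
  induction d with
  | zero => rfl
  | succ d ih =>
    rw [walkAlong, Walk.support_concat, ih, List.range_succ (n := d + 1), List.map_append]
    rfl

theorem edges_walkAlong :
    (walkAlong hv a d).edges = (List.range d).map fun t => s(v (a + t), v (a + t + 1)) := by
  induction d with
  | zero => rfl
  | succ d ih =>
    rw [walkAlong, Walk.edges_concat, ih, List.range_succ, List.map_append, List.concat_eq_append]
    rfl

end walkAlong

/-- `v 0, v 1, …, v (n - 1)` traverse a Hamiltonian cycle of `G`, and `v` repeats this with
period `n`. -/
structure IsHamCycleSeq (G : SimpleGraph V) (n : ℕ) (v : ℕ → V) : Prop where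
  periodic : Function.Periodic v n
  injOn : Set.InjOn v (Set.Iio n)
  surjective : Function.Surjective v
  adj : ∀ i, G.Adj (v i) (v (i + 1))

namespace IsHamCycleSeq

variable {n : ℕ} {v : ℕ → V}

theorem apply_period (h : IsHamCycleSeq G n v) : v n = v 0 := by
  simpa using h.periodic 0

theorem apply_eq_apply_iff (h : IsHamCycleSeq G n v) (hn : 0 < n) {x y : ℕ} :
    v x = v y ↔ x ≡ y [MOD n] := by
  rw [← h.periodic.map_mod_nat x, ← h.periodic.map_mod_nat y]
  exact h.injOn.eq_iff (Nat.mod_lt _ hn) (Nat.mod_lt _ hn)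

theorem eq_or_of_apply_eq (h : IsHamCycleSeq G n v) (hn : 0 < n) {x y : ℕ} (hx : x ≤ n)
    (hy : y ≤ n) (hxy : v x = v y) : x = y ∨ x = 0 ∧ y = n ∨ x = n ∧ y = 0 := by
  by_cases hlt : |(y : ℤ) - x| < n
  · exact Or.inl (((h.apply_eq_apply_iff hn).1 hxy).eq_of_abs_lt hlt)
  · rw [abs_sub_lt_iff] at hlt
    omega

theorem exists_lt_apply_eq (h : IsHamCycleSeq G n v) (hn : 0 < n) (x : V) : ∃ i < n, v i = x :=
  let ⟨i, hi⟩ := h.surjective x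
  ⟨i % n, Nat.mod_lt _ hn, (h.periodic.map_mod_nat i).trans hi⟩

theorem isPath_walkAlong (h : IsHamCycleSeq G n v) (a : ℕ) {d : ℕ} (hd : d < n) :
    (walkAlong h.adj a d).IsPath := by
  rw [Walk.isPath_def, support_walkAlong]
  refine List.nodup_range.map_on fun s hs t ht hst => ?_
  rw [List.mem_range] at hs ht
  exact (((h.apply_eq_apply_iff (by omega)).1 hst).add_left_cancel' a).eq_of_lt_of_lt
    (by omega) (by omega)

theorem exists_isPath_mem_edges_of_lt (h : IsHamCycleSeq G n v) {i j : ℕ} (hij : i < j)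
    (hj : j < n) : ∃ p : G.Walk (v j) (v i), p.IsPath ∧ s(v (n - 1), v n) ∈ p.edges := by
  have hend : v (j + (n - j + i)) = v i := by
    rw [show j + (n - j + i) = i + n by omega]
    exact h.periodic i
  refine ⟨(walkAlong h.adj j (n - j + i)).copy rfl hend, ?_, ?_⟩
  · rw [Walk.isPath_copy]
    exact h.isPath_walkAlong j (by omega)
  · rw [Walk.edges_copy, edges_walkAlong]
    refine List.mem_map.2 ⟨n - 1 - j, List.mem_range.2 (by omega), ?_⟩
    rw [show j + (n - 1 - j) = n - 1 by omega, show n - 1 + 1 = n by omega]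

theorem exists_isPath_mem_edges (h : IsHamCycleSeq G n v) (hn : 0 < n) {x y : V} (hxy : x ≠ y) :
    ∃ p : G.Walk x y, p.IsPath ∧ s(v (n - 1), v n) ∈ p.edges := by
  obtain ⟨i, hi, rfl⟩ := h.exists_lt_apply_eq hn x
  obtain ⟨j, hj, rfl⟩ := h.exists_lt_apply_eq hn y
  rcases lt_trichotomy i j with hij | rfl | hji
  · obtain ⟨p, hp, he⟩ := h.exists_isPath_mem_edges_of_lt hij hj
    exact ⟨p.reverse, hp.reverse, by rwa [Walk.edges_reverse, List.mem_reverse]⟩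
  · exact absurd rfl hxy
  · exact h.exists_isPath_mem_edges_of_lt hji hi

theorem exists_two_coloring (h : IsHamCycleSeq G n v) (hn : 0 < n) :
    ∃ c : Sym2 V → ℕ, (∀ e ∈ G.edgeSet, c e < 2) ∧ IsCFCColoring G c := by
  classical
  exact ⟨_, fun e _ => by split <;> omega,
    isCFCColoring_ite_eq _ fun _ _ => h.exists_isPath_mem_edges hn⟩

end IsHamCycleSeq

section edgeOrder

variable (G) (n : ℕ) (v : ℕ → V)

/-- For `i < b < n`, the edge `v i v b` is a chord of the cycle `v`; the condition `b + 1 < n + i`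
excludes the closing edge `v 0 v (n - 1)`. -/
def IsChord (i b : ℕ) : Prop :=
  i + 1 < b ∧ b < n ∧ b + 1 < n + i ∧ G.Adj (v i) (v b)

open Classical in
noncomputable def edgeBlock (i : ℕ) : List (ℕ × ℕ) :=
  ((List.range n).filter (IsChord G n v i ·)).map (Prod.mk i) ++ [(i, i + 1)]

noncomputable def edgeOrder : List (ℕ × ℕ) :=
  (List.range n).flatMap (edgeBlock G n v)

variable {G n v}

theorem mem_edgeBlock {i : ℕ} {p : ℕ × ℕ} :
    p ∈ edgeBlock G n v i ↔ p.1 = i ∧ (p.2 = i + 1 ∨ IsChord G n v i p.2) := by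
  obtain ⟨a, b⟩ := p
  simp only [edgeBlock, List.mem_append, List.mem_map, List.mem_filter, List.mem_range,
    decide_eq_true_eq, Prod.mk.injEq, List.mem_singleton]
  constructor
  · rintro (⟨b, ⟨-, hb⟩, rfl, rfl⟩ | ⟨rfl, rfl⟩)
    · exact ⟨rfl, Or.inr hb⟩
    · exact ⟨rfl, Or.inl rfl⟩
  · rintro ⟨rfl, rfl | hb⟩
    · exact Or.inr ⟨rfl, rfl⟩
    · exact Or.inl ⟨b, ⟨hb.2.1, hb⟩, rfl, rfl⟩

theorem mem_edgeOrder {p : ℕ × ℕ} :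
    p ∈ edgeOrder G n v ↔ p.1 < n ∧ (p.2 = p.1 + 1 ∨ IsChord G n v p.1 p.2) := by
  simp only [edgeOrder, List.mem_flatMap, List.mem_range, mem_edgeBlock]
  constructor
  · rintro ⟨i, hi, rfl, hp⟩
    exact ⟨hi, hp⟩
  · rintro ⟨hi, hp⟩
    exact ⟨p.1, hi, rfl, hp⟩

theorem adj_of_mem_edgeOrder (hv : ∀ i, G.Adj (v i) (v (i + 1))) {p : ℕ × ℕ}
    (hp : p ∈ edgeOrder G n v) : G.Adj (v p.1) (v p.2) := by
  obtain ⟨-, hp | hp⟩ := mem_edgeOrder.1 hp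
  · exact hp ▸ hv p.1
  · exact hp.2.2.2

theorem nodup_edgeOrder : (edgeOrder G n v).Nodup := by
  refine List.nodup_flatMap.2 ⟨fun i _ => ?_, List.nodup_range.imp fun hij p hpi hpj => ?_⟩
  · refine List.Nodup.append ((List.nodup_range.filter _).map (Prod.mk_right_injective i))
      (List.nodup_singleton _) (List.disjoint_singleton.2 fun hmem => ?_)
    obtain ⟨b, hb, hbi⟩ := List.mem_map.1 hmem
    have hchord : IsChord G n v i b := by simpa using (List.mem_filter.1 hb).2
    rw [Prod.mk.injEq] at hbi
    exact absurd hchord.1 (by omega)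
  · exact hij ((mem_edgeBlock.1 hpi).1.symm.trans (mem_edgeBlock.1 hpj).1)

theorem le_length_edgeOrder : n ≤ (edgeOrder G n v).length := by
  have hsub : (List.range n).map (fun i => (i, i + 1)) ⊆ edgeOrder G n v := fun p hp => by
    obtain ⟨i, hi, rfl⟩ := List.mem_map.1 hp
    exact mem_edgeOrder.2 ⟨List.mem_range.1 hi, Or.inl rfl⟩
  simpa using ((List.nodup_range.map fun _ _ hij => (Prod.ext_iff.1 hij).1).subperm hsub).length_le

theorem isChain_edgeOrder : (edgeOrder G n v).IsChain fun p q => v q.1 ∈ s(v p.1, v p.2) := by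
  rw [edgeOrder, List.flatMap_def, List.isChain_flatten (by simp [edgeBlock])]
  refine ⟨?_, ?_⟩
  · simp only [List.mem_map]
    rintro _ ⟨i, -, rfl⟩
    refine List.Pairwise.isChain (List.pairwise_of_forall_mem_list fun p hp q hq => ?_)
    rw [(mem_edgeBlock.1 hq).1, ← (mem_edgeBlock.1 hp).1]
    exact Sym2.mem_mk_left _ _
  · rw [List.isChain_map, List.isChain_range]
    intro i _ p hp q hq
    rw [(mem_edgeBlock.1 (List.mem_of_mem_head? hq)).1]
    simp only [edgeBlock, List.getLast?_append, List.getLast?_singleton, Option.some_or,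
      Option.mem_def, Option.some.injEq] at hp
    rw [← hp]
    exact Sym2.mem_mk_right _ _

theorem getLast?_edgeOrder (hn : 0 < n) : (edgeOrder G n v).getLast? = some (n - 1, n) := by
  obtain ⟨m, rfl⟩ := Nat.exists_eq_add_of_lt hn
  simp [edgeOrder, edgeBlock, List.range_succ, List.flatMap_append]

theorem fst_eq_zero_of_mem_head?_edgeOrder (hn : 0 < n) {p : ℕ × ℕ}
    (hp : p ∈ (edgeOrder G n v).head?) : p.1 = 0 := by
  obtain ⟨m, rfl⟩ := Nat.exists_eq_add_of_lt hn
  rw [edgeOrder, List.range_succ_eq_map, List.flatMap_cons,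
    List.head?_append_of_ne_nil _ (by simp [edgeBlock])] at hp
  exact (mem_edgeBlock.1 (List.mem_of_mem_head? hp)).1

end edgeOrder

namespace IsHamCycleSeq

variable {n : ℕ} {v : ℕ → V}

theorem injOn_edgeOrder (h : IsHamCycleSeq G n v) (hn : 3 ≤ n) :
    Set.InjOn (fun p : ℕ × ℕ => s(v p.1, v p.2)) {p | p ∈ edgeOrder G n v} := by
  rintro ⟨a, b⟩ hp ⟨c, d⟩ hq hpq
  simp only [Set.mem_ofPred_eq, mem_edgeOrder, IsChord] at hp hq
  have key {x y : ℕ} (hx : x ≤ n) (hy : y ≤ n) (hxy : v x = v y) :=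
    h.eq_or_of_apply_eq (by omega) hx hy hxy
  rw [Prod.mk.injEq]
  rcases Sym2.eq_iff.1 hpq with ⟨h1, h2⟩ | ⟨h1, h2⟩
  · have := key (by omega) (by omega) h1
    have := key (by omega) (by omega) h2
    omega
  · have := key (by omega) (by omega) h1
    have := key (by omega) (by omega) h2
    omega

theorem exists_mem_edgeOrder_of_lt (h : IsHamCycleSeq G n v) {i j : ℕ} (hij : i < j)
    (hj : j < n) (hadj : G.Adj (v i) (v j)) :
    ∃ p ∈ edgeOrder G n v, s(v p.1, v p.2) = s(v i, v j) := by
  by_cases hcyc : j = i + 1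
  · exact ⟨(i, i + 1), mem_edgeOrder.2 ⟨by omega, Or.inl rfl⟩, by rw [hcyc]⟩
  by_cases hclose : i = 0 ∧ j + 1 = n
  · obtain ⟨rfl, rfl⟩ := hclose
    refine ⟨(j, j + 1), mem_edgeOrder.2 ⟨by omega, Or.inl rfl⟩, ?_⟩
    rw [Sym2.eq_swap, h.apply_period]
  · exact ⟨(i, j), mem_edgeOrder.2 ⟨by omega, Or.inr ⟨by omega, hj, by omega, hadj⟩⟩,
      rfl⟩

theorem exists_mem_edgeOrder (h : IsHamCycleSeq G n v) (hn : 0 < n) {e : Sym2 V}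
    (he : e ∈ G.edgeSet) : ∃ p ∈ edgeOrder G n v, s(v p.1, v p.2) = e := by
  induction e using Sym2.ind with
  | _ x y =>
  obtain ⟨i, hi, rfl⟩ := h.exists_lt_apply_eq hn x
  obtain ⟨j, hj, rfl⟩ := h.exists_lt_apply_eq hn y
  rcases lt_trichotomy i j with hij | rfl | hji
  · exact h.exists_mem_edgeOrder_of_lt hij hj he
  · exact absurd he (G.loopless.irrefl _)
  · rw [Sym2.eq_swap]
    exact h.exists_mem_edgeOrder_of_lt hji hi (G.adj_symm he)

theorem exists_lineG (h : IsHamCycleSeq G n v) (hn : 3 ≤ n) :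
    ∃ m, n ≤ m ∧ ∃ w : ℕ → G.edgeSet, IsHamCycleSeq (lineG G) m w := by
  set P := edgeOrder G n v
  have hnP : n ≤ P.length := le_length_edgeOrder
  have hm : 0 < P.length := by omega
  let p (t : ℕ) : ℕ × ℕ := P[t % P.length]'(Nat.mod_lt _ hm)
  have hp (t : ℕ) : p t ∈ P := List.getElem_mem _
  have hinj {s t : ℕ} (hst : s(v (p s).1, v (p s).2) = s(v (p t).1, v (p t).2)) :
      s % P.length = t % P.length :=
    nodup_edgeOrder.getElem_inj_iff.1 (h.injOn_edgeOrder hn (hp s) (hp t) hst)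
  refine ⟨P.length, hnP, fun t => ⟨s(v (p t).1, v (p t).2), adj_of_mem_edgeOrder h.adj (hp t)⟩,
    fun t => by simp [p, Nat.add_mod_right], fun s hs t ht hst => ?_, ?_, fun t => ⟨?_, ?_⟩⟩
  · simpa [Nat.mod_eq_of_lt hs, Nat.mod_eq_of_lt ht] using hinj (congrArg Subtype.val hst)
  · rintro ⟨e, he⟩
    obtain ⟨q, hq, rfl⟩ := h.exists_mem_edgeOrder (by omega) he
    obtain ⟨t, ht, rfl⟩ := List.getElem_of_mem hq
    exact ⟨t, Subtype.ext (by simp only [p, P, Nat.mod_eq_of_lt ht])⟩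
  · exact fun hst => Nat.mod_ne_add_one_mod (by omega) t (hinj (congrArg Subtype.val hst))
  · refine ⟨v (p (t + 1)).1, isChain_edgeOrder.rel_getElem_mod (List.ne_nil_of_length_pos hm)
      (fun x hx y hy => ?_) t, Sym2.mem_mk_left _ _⟩
    rw [getLast?_edgeOrder (by omega), Option.mem_some_iff] at hx
    rw [← hx, fst_eq_zero_of_mem_head?_edgeOrder (by omega) hy, ← h.apply_period]
    exact Sym2.mem_mk_right _ _

theorem exists_ne_not_lineG_adj (h : IsHamCycleSeq G n v) (hn : 4 ≤ n) :
    ∃ e f : G.edgeSet, e ≠ f ∧ ¬(lineG G).Adj e f := by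
  have hv {a b : ℕ} (ha : a < 4) (hb : b < 4) (hab : v a = v b) : a = b :=
    h.injOn (Set.mem_Iio.2 (by omega)) (Set.mem_Iio.2 (by omega)) hab
  have hdisj (x : V) (hx : x ∈ s(v 0, v 1)) (hx' : x ∈ s(v 2, v 3)) : False := by
    rcases Sym2.mem_iff.1 hx with rfl | rfl <;> rcases Sym2.mem_iff.1 hx' with h' | h' <;>
      have := hv (by omega) (by omega) h' <;> omega
  refine ⟨⟨_, G.mem_edgeSet.2 (h.adj 0)⟩, ⟨_, G.mem_edgeSet.2 (h.adj 2)⟩, fun he => ?_,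
    fun ⟨_, x, hx, hx'⟩ => hdisj x hx hx'⟩
  have he' : s(v 0, v 1) = s(v 2, v 3) := congrArg Subtype.val he
  exact hdisj (v 0) (Sym2.mem_mk_left _ _) (he' ▸ Sym2.mem_mk_left _ _)

end IsHamCycleSeq

end ConflictFree

theorem isHamCycleSeq_lineG_star {r : ℕ} (hr : 2 ≤ r) :
    ∃ w, IsHamCycleSeq (lineG (completeBipartiteGraph (Fin 1) (Fin r))) r w := by
  have hmem (j : Fin r) :
      s(Sum.inl 0, Sum.inr j) ∈ (completeBipartiteGraph (Fin 1) (Fin r)).edgeSet := by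
    simp
  refine ⟨fun t => ⟨_, hmem ⟨t % r, Nat.mod_lt _ (by omega)⟩⟩, fun t => by simp,
    fun s hs t ht hst => ?_, ?_,
    fun t => ⟨?_, Sum.inl 0, Sym2.mem_mk_left _ _, Sym2.mem_mk_left _ _⟩⟩
  · simpa [Nat.mod_eq_of_lt hs, Nat.mod_eq_of_lt ht] using hst
  · rintro ⟨e, he⟩
    induction e using Sym2.ind with
    | _ x y =>
    rcases x with i | i <;> rcases y with j | j <;> simp at he
    · exact ⟨j, Subtype.ext (by simp [Subsingleton.elim i 0, Nat.mod_eq_of_lt j.2])⟩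
    · exact ⟨i, Subtype.ext (by
        simp [Subsingleton.elim j 0, Nat.mod_eq_of_lt i.2, Sym2.eq_swap])⟩
  · simpa using Nat.mod_ne_add_one_mod hr t

theorem exists_isHamCycleSeq_iterLine_star {r : ℕ} (hr : 4 ≤ r) (k : ℕ) :
    ∃ n, 4 ≤ n ∧
      ∃ v, IsHamCycleSeq (iterLine (completeBipartiteGraph (Fin 1) (Fin r)) (k + 1)).2 n v := by
  induction k with
  | zero =>
    obtain ⟨w, hw⟩ := isHamCycleSeq_lineG_star (by omega : 2 ≤ r)
    exact ⟨r, hr, w, hw⟩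
  | succ k ih =>
    obtain ⟨n, hn, v, hv⟩ := ih
    obtain ⟨m, hm, w, hw⟩ := hv.exists_lineG (by omega)
    exact ⟨m, by omega, w, hw⟩

theorem cfcNum_iterLine_star {r : ℕ} (hr : 4 ≤ r) {k : ℕ} (hk : 2 ≤ k) :
    cfcNum (iterLine (completeBipartiteGraph (Fin 1) (Fin r)) k).2 = 2 := by
  obtain ⟨k, rfl⟩ := Nat.exists_eq_add_of_le' hk
  obtain ⟨n, hn, v, hv⟩ := exists_isHamCycleSeq_iterLine_star hr (k + 1)
  obtain ⟨n', hn', v', hv'⟩ := exists_isHamCycleSeq_iterLine_star hr k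
  obtain ⟨e, f, hef, hadj⟩ := hv'.exists_ne_not_lineG_adj hn'
  exact cfcNum_eq_two (hv.exists_two_coloring (by omega)) hef hadj

/-- For a star of order ≥ 5 and k ≥ 2: cfc(L^{k+1}(G)) = cfc(L^k(G)) = 2. -/
theorem stmt_16 (r : ℕ) (hr : 4 ≤ r) (k : ℕ) (hk : 2 ≤ k) :
    cfcNum (iterLine (completeBipartiteGraph (Fin 1) (Fin r)) (k + 1)).2 = 2 ∧
      cfcNum (iterLine (completeBipartiteGraph (Fin 1) (Fin r)) k).2 = 2 :=
  ⟨cfcNum_iterLine_star hr (by omega), cfcNum_iterLine_star hr hk⟩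
end

section
/- Let G = K_n be the complete graph with n ≥ 4. Then cfc(G) = 1 and cfc(L^k(G)) = 2 for every positive integer k. -/
open SimpleGraph

universe u

/-! If `v₀ v₁ … vₘ₋₁` is a Hamiltonian cycle, colouring the closing edge `v₀vₘ₋₁` with 1 and all
other edges with 0 is conflict-free: two vertices `vᵢ, vⱼ` (`i < j`) are joined by the path
`vᵢ … v₀ vₘ₋₁ … vⱼ`. Hamiltonicity passes to line graphs: run through `v₀, v₁, …`, listing at `vᵢ`
its edges to later vertices and ending with `vᵢvᵢ₊₁`; consecutive edges meet, and starting with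
`v₀vₘ₋₁` closes the cycle. So every `L^k(K_n)` is Hamiltonian. For `k ≥ 1` it is not complete,
since `L^(k-1)(K_n)` has two disjoint edges, whereas a one-colour conflict-free colouring exists
only on a complete graph; this gives `cfc = 2`, while `K_n` itself needs a single colour. -/

theorem List.Nodup.head_ne_getLast {α : Type*} {l : List α} (hl : l.Nodup)
    (h2 : 2 ≤ l.length) : ∀ a ∈ l.head?, ∀ z ∈ l.getLast?, a ≠ z := by
  obtain _ | ⟨a, t⟩ := l
  · simp at h2
  have ht : t ≠ [] := by rintro rfl; simp at h2
  simp only [List.head?_cons, List.getLast?_cons, List.getLast?_eq_some_getLast ht,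
    Option.getD_some, Option.mem_some_iff]
  rintro _ rfl _ rfl rfl
  exact (List.nodup_cons.1 hl).1 (List.getLast_mem ht)

theorem List.IsChain.and {α : Type*} {R S : α → α → Prop} {l : List α}
    (hR : l.IsChain R) (hS : l.IsChain S) : l.IsChain fun a b => R a b ∧ S a b :=
  List.isChain_iff_getElem.2 fun i hi => ⟨hR.getElem i hi, hS.getElem i hi⟩

namespace SimpleGraph

variable {V : Type u} {G : SimpleGraph V}

theorem IsCFCColoring.adj_of_forall_eq {c : Sym2 V → ℕ} (hc : IsCFCColoring G c) {i : ℕ}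
    (hi : ∀ e ∈ G.edgeSet, c e = i) {u v : V} (huv : u ≠ v) : G.Adj u v := by
  obtain ⟨p, -, j, hj⟩ := hc u v huv
  have hconst : p.edges.map c = List.replicate p.length i := by
    rw [List.eq_replicate_iff, List.length_map, Walk.length_edges]
    exact ⟨rfl, by simpa using fun e he => hi e (p.edges_subset_edgeSet he)⟩
  rw [hconst, List.count_replicate] at hj
  split at hj
  · exact Walk.adj_of_length_eq_one hj
  · omega

theorem cfcNum_le {m : ℕ} (h : ∃ c, (∀ e ∈ G.edgeSet, c e < m) ∧ IsCFCColoring G c) :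
    cfcNum G ≤ m :=
  Nat.sInf_le h

theorem exists_isCFCColoring_lt_cfcNum {m : ℕ}
    (h : ∃ c, (∀ e ∈ G.edgeSet, c e < m) ∧ IsCFCColoring G c) :
    ∃ c, (∀ e ∈ G.edgeSet, c e < cfcNum G) ∧ IsCFCColoring G c :=
  Nat.sInf_mem
    (s := {n | ∃ c : Sym2 V → ℕ, (∀ e ∈ G.edgeSet, c e < n) ∧ IsCFCColoring G c}) ⟨m, h⟩

theorem eq_top_of_cfcNum_le_one {m : ℕ}
    (h : ∃ c, (∀ e ∈ G.edgeSet, c e < m) ∧ IsCFCColoring G c) (h1 : cfcNum G ≤ 1) : G = ⊤ := by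
  obtain ⟨c, hlt, hc⟩ := exists_isCFCColoring_lt_cfcNum h
  ext u v
  exact ⟨Adj.ne, hc.adj_of_forall_eq (i := 0) fun e he => by have := hlt e he; omega⟩

theorem isCFCColoring_top (c : Sym2 V → ℕ) : IsCFCColoring ⊤ c := by
  intro u v huv
  have h : (⊤ : SimpleGraph V).Adj u v := huv
  exact ⟨h.toWalk, by simp [huv], c s(u, v), by simp [h.edges_toWalk]⟩

theorem cfcNum_top [Nontrivial V] : cfcNum (⊤ : SimpleGraph V) = 1 := by
  have h1 : ∃ c, (∀ e ∈ (⊤ : SimpleGraph V).edgeSet, c e < 1) ∧ IsCFCColoring ⊤ c :=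
    ⟨fun _ => 0, fun _ _ => Nat.one_pos, isCFCColoring_top _⟩
  refine (cfcNum_le h1).antisymm (Nat.one_le_iff_ne_zero.2 fun h0 => ?_)
  obtain ⟨c, hlt, -⟩ := exists_isCFCColoring_lt_cfcNum h1
  obtain ⟨u, v, huv⟩ := exists_pair_ne V
  exact (Nat.not_lt_zero _) (h0 ▸ hlt s(u, v) huv)

theorem cfcNum_eq_two (h : ∃ c, (∀ e ∈ G.edgeSet, c e < 2) ∧ IsCFCColoring G c) (hG : G ≠ ⊤) :
    cfcNum G = 2 :=
  (cfcNum_le h).antisymm <| by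
    by_contra hlt
    exact hG (eq_top_of_cfcNum_le_one h (by omega))

/-- `l` lists the vertices of a Hamiltonian cycle of `G` in cyclic order, so the cycle is closed
by the edge `s(l.head, l.getLast)`. -/
def IsHamiltonianList (G : SimpleGraph V) (l : List V) : Prop :=
  l.Nodup ∧ (∀ v, v ∈ l) ∧ l.IsChain G.Adj ∧ ∀ a ∈ l.head?, ∀ z ∈ l.getLast?, G.Adj a z

theorem isHamiltonianList_top {l : List V} (hl : l.Nodup) (hmem : ∀ v, v ∈ l)
    (h2 : 2 ≤ l.length) : IsHamiltonianList ⊤ l :=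
  ⟨hl, hmem, hl.isChain, hl.head_ne_getLast h2⟩

theorem exists_walk_support_eq {l : List V} (hl : l.IsChain G.Adj) {u v : V}
    (hu : l.head? = some u) (hv : l.getLast? = some v) : ∃ p : G.Walk u v, p.support = l := by
  have hne : l ≠ [] := by rintro rfl; simp at hu
  rw [List.head?_eq_some_head hne, Option.some_inj] at hu
  rw [List.getLast?_eq_some_getLast hne, Option.some_inj] at hv
  exact ⟨(Walk.ofSupport l hne hl).copy hu hv, by simp⟩

theorem exists_isPath_mem_edges_of_eq_append {l A M B : List V} {u v a z : V}
    (hsplit : l = A ++ u :: (M ++ v :: B)) (hl : l.Nodup) (hch : l.IsChain G.Adj)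
    (ha : l.head? = some a) (hz : l.getLast? = some z) (haz : G.Adj a z) :
    ∃ p : G.Walk u v, p.IsPath ∧ s(a, z) ∈ p.edges := by
  rw [show A ++ u :: (M ++ v :: B) = (A ++ [u]) ++ (M ++ v :: B) by simp] at hsplit
  subst hsplit
  obtain ⟨hchA, hchMB, -⟩ := List.isChain_append.1 hch
  obtain ⟨W₁, hW₁⟩ := exists_walk_support_eq (u := u) (v := a)
    (List.isChain_reverse.2 (hchA.imp fun _ _ h => h.symm)) (by simp)
    (by simpa [List.getLast?_cons] using ha)
  obtain ⟨W₂, hW₂⟩ := exists_walk_support_eq (u := z) (v := v)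
    (List.isChain_reverse.2 ((List.isChain_append.1 hchMB).2.1.imp fun _ _ h => h.symm))
    (by simpa [List.getLast?_cons] using hz) (by simp)
  refine ⟨W₁.append (W₂.cons haz), Walk.IsPath.mk' ?_, by simp⟩
  rw [Walk.support_append, Walk.support_cons, List.tail_cons, hW₁, hW₂, ← List.reverse_append,
    List.nodup_reverse, List.nodup_append_comm]
  exact hl.sublist (by simp)

theorem IsHamiltonianList.exists_isPath_mem_edges {l : List V} (h : IsHamiltonianList G l)
    {a z : V} (ha : l.head? = some a) (hz : l.getLast? = some z) {u v : V} (huv : u ≠ v) :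
    ∃ p : G.Walk u v, p.IsPath ∧ s(a, z) ∈ p.edges := by
  obtain ⟨hl, hmem, hch, hclose⟩ := h
  obtain ⟨A, r, rfl⟩ := List.append_of_mem (hmem u)
  rcases List.mem_append.1 (hmem v) with hv | hv
  · obtain ⟨A', M, rfl⟩ := List.append_of_mem hv
    obtain ⟨p, hp, he⟩ := exists_isPath_mem_edges_of_eq_append (A := A') (u := v) (M := M)
      (v := u) (B := r) (by simp) hl hch ha hz (hclose a ha z hz)
    exact ⟨p.reverse, hp.reverse, by simpa using he⟩
  · obtain ⟨M, B, rfl⟩ := List.append_of_mem ((List.mem_cons.1 hv).resolve_left huv.symm)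
    exact exists_isPath_mem_edges_of_eq_append rfl hl hch ha hz (hclose a ha z hz)

theorem IsHamiltonianList.exists_isCFCColoring_lt_two {l : List V} (h : IsHamiltonianList G l) :
    ∃ c, (∀ e ∈ G.edgeSet, c e < 2) ∧ IsCFCColoring G c := by
  classical
  obtain _ | ⟨a, t⟩ := l
  · exact ⟨0, by simp, fun u => absurd (h.2.1 u) List.not_mem_nil⟩
  obtain ⟨z, hz⟩ : ∃ z, (a :: t).getLast? = some z :=
    ⟨_, List.getLast?_eq_some_getLast (List.cons_ne_nil a t)⟩
  refine ⟨fun e => if e = s(a, z) then 1 else 0, fun e _ => by dsimp only; split <;> omega, ?_⟩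
  intro u v huv
  obtain ⟨p, hp, he⟩ := h.exists_isPath_mem_edges rfl hz huv
  refine ⟨p, hp, 1, ?_⟩
  calc (p.edges.map _).count 1 = p.edges.count s(a, z) := by
        rw [List.count_eq_countP, List.countP_map, List.count_eq_countP]
        exact List.countP_congr fun e _ => by by_cases e = s(a, z) <;> simp [*]
    _ = 1 := List.count_eq_one_of_mem hp.isTrail.edges_nodup he

section lineTour

variable [DecidableRel G.Adj]

/-- Along a Hamiltonian cycle listed by `l`, a Hamiltonian cycle of `lineG G`: the reversal makes
it start with the closing edge `s(l.head, l.getLast)`, which meets the final edge at `l.getLast`. -/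
def lineTour (G : SimpleGraph V) [DecidableRel G.Adj] : List V → List (Sym2 V)
  | v :: w :: rest =>
      (rest.filter (G.Adj v ·)).reverse.map (s(v, ·)) ++ s(v, w) :: lineTour G (w :: rest)
  | _ => []

theorem mem_edgeSet_of_mem_lineTour : ∀ {l : List V}, l.IsChain G.Adj →
    ∀ {e : Sym2 V}, e ∈ lineTour G l → e ∈ G.edgeSet
  | v :: w :: rest, hl, e, he => by
    simp only [lineTour, List.mem_append, List.mem_map, List.mem_reverse, List.mem_filter,
      List.mem_cons] at he
    rcases he with ⟨x, ⟨-, hx⟩, rfl⟩ | rfl | he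
    · simpa using hx
    · exact (List.isChain_cons_cons.1 hl).1
    · exact mem_edgeSet_of_mem_lineTour (List.isChain_cons_cons.1 hl).2 he
  | [], _, _, he | [_], _, _, he => by simp [lineTour] at he

theorem mem_of_mem_lineTour : ∀ {l : List V} {e : Sym2 V}, e ∈ lineTour G l →
    ∀ {x : V}, x ∈ e → x ∈ l
  | v :: w :: rest, e, he, x, hx => by
    simp only [lineTour, List.mem_append, List.mem_map, List.mem_reverse, List.mem_filter,
      List.mem_cons] at he
    rcases he with ⟨y, ⟨hy, -⟩, rfl⟩ | rfl | he
    · rcases Sym2.mem_iff.1 hx with rfl | rfl <;> simp [hy]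
    · rcases Sym2.mem_iff.1 hx with rfl | rfl <;> simp
    · exact List.mem_cons_of_mem v (mem_of_mem_lineTour he hx)
  | [], _, he, _, _ | [_], _, he, _, _ => by simp [lineTour] at he

theorem mk_mem_lineTour_cons_cons {v w y : V} {rest : List V} (hvy : G.Adj v y)
    (hy : y ∈ w :: rest) : s(v, y) ∈ lineTour G (v :: w :: rest) := by
  rcases List.mem_cons.1 hy with rfl | hy
  · simp [lineTour]
  · exact List.mem_append_left _ (List.mem_map.2 ⟨y, by simp [hy, hvy], rfl⟩)

theorem mk_mem_lineTour : ∀ {l : List V} {x y : V}, G.Adj x y → x ∈ l → y ∈ l →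
    s(x, y) ∈ lineTour G l
  | v :: w :: rest, x, y, hxy, hx, hy => by
    rcases List.mem_cons.1 hx with rfl | hx'
    · exact mk_mem_lineTour_cons_cons hxy ((List.mem_cons.1 hy).resolve_left hxy.ne')
    rcases List.mem_cons.1 hy with rfl | hy'
    · exact Sym2.eq_swap ▸ mk_mem_lineTour_cons_cons hxy.symm hx'
    · simp only [lineTour, List.mem_append, List.mem_cons]
      exact Or.inr (Or.inr (mk_mem_lineTour hxy hx' hy'))
  | [v], x, y, hxy, hx, hy => by
    rw [List.mem_singleton] at hx hy
    subst hx hy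
    exact (G.irrefl hxy).elim
  | [], _, _, _, hx, _ => absurd hx List.not_mem_nil

theorem nodup_lineTour : ∀ {l : List V}, l.Nodup → (lineTour G l).Nodup
  | v :: w :: rest, hl => by
    obtain ⟨hv, hw, hrest⟩ : v ∉ w :: rest ∧ w ∉ rest ∧ rest.Nodup := by
      simp only [List.nodup_cons] at hl
      exact ⟨hl.1, hl.2.1, hl.2.2⟩
    have hT : ∀ e ∈ lineTour G (w :: rest), v ∉ e := fun e he hve =>
      hv (mem_of_mem_lineTour he hve)
    rw [lineTour, List.nodup_append, List.nodup_cons]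
    refine ⟨(List.nodup_reverse.2 (hrest.filter _)).map fun _ _ => Sym2.congr_right.1,
      ⟨fun h => hT _ h (Sym2.mem_mk_left v w), nodup_lineTour (List.nodup_cons.2 ⟨hw, hrest⟩)⟩,
      ?_⟩
    simp only [List.mem_map, List.mem_reverse, List.mem_filter, List.mem_cons]
    rintro _ ⟨x, ⟨hx, -⟩, rfl⟩ f (rfl | hf) hxf
    · exact hw (Sym2.congr_right.1 hxf ▸ hx)
    · exact hT f hf (hxf ▸ Sym2.mem_mk_left v x)
  | [], _ | [_], _ => by simp [lineTour]

theorem mem_of_mem_head?_lineTour {w : V} {rest : List V} :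
    ∀ e ∈ (lineTour G (w :: rest)).head?, w ∈ e := by
  obtain _ | ⟨x, r⟩ := rest
  · simp [lineTour]
  · cases h : (r.filter (G.Adj w ·)).reverse <;> simp [lineTour, h]

theorem isChain_lineTour : ∀ l : List V, (lineTour G l).IsChain fun e f => ∃ x, x ∈ e ∧ x ∈ f
  | v :: w :: rest => by
    rw [lineTour, ← List.singleton_append, ← List.append_assoc]
    refine List.isChain_append.2 ⟨?_, isChain_lineTour (w :: rest), ?_⟩
    · refine List.Pairwise.isChain (List.pairwise_of_forall_mem_list fun e he f hf => ⟨v, ?_, ?_⟩)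
      all_goals simp only [List.mem_append, List.mem_map, List.mem_singleton] at he hf
      · rcases he with ⟨x, -, rfl⟩ | rfl <;> simp
      · rcases hf with ⟨x, -, rfl⟩ | rfl <;> simp
    · intro e he f hf
      rw [List.getLast?_append_of_ne_nil _ (List.cons_ne_nil _ _), List.getLast?_singleton,
        Option.mem_some_iff] at he
      exact ⟨w, he ▸ Sym2.mem_mk_right v w, mem_of_mem_head?_lineTour f hf⟩
  | [] | [_] => by simp [lineTour]

theorem head?_lineTour {a w z : V} {rest : List V} (haz : G.Adj a z)
    (hz : rest.getLast? = some z) : (lineTour G (a :: w :: rest)).head? = some s(a, z) := by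
  obtain ⟨r, rfl⟩ := List.getLast?_eq_some_iff.1 hz
  simp [lineTour, haz]

theorem mem_of_mem_getLast?_lineTour : ∀ {l : List V} {z : V}, l.getLast? = some z →
    ∀ e ∈ (lineTour G l).getLast?, z ∈ e
  | [v, w], z, hz => by simp_all [lineTour]
  | v :: w :: x :: r, z, hz => by
    obtain ⟨f, T, hT⟩ := List.exists_cons_of_ne_nil (l := lineTour G (w :: x :: r))
      (by simp [lineTour])
    rw [lineTour, hT, List.getLast?_append_of_ne_nil _ (List.cons_ne_nil _ _),
      List.getLast?_cons_cons, ← hT]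
    exact mem_of_mem_getLast?_lineTour (by simpa using hz)
  | [], _, _ | [_], _, _ => by simp [lineTour]

theorem length_le_length_lineTour_add_one : ∀ l : List V, l.length ≤ (lineTour G l).length + 1
  | v :: w :: rest => by
    have := length_le_length_lineTour_add_one (w :: rest)
    simp only [lineTour, List.length_append, List.length_cons, List.length_map,
      List.length_reverse] at this ⊢
    omega
  | [] | [_] => by simp [lineTour]

theorem length_le_length_lineTour {a w z : V} {rest : List V} (haz : G.Adj a z)
    (hz : rest.getLast? = some z) :
    (a :: w :: rest).length ≤ (lineTour G (a :: w :: rest)).length := by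
  have hfilter : 0 < (rest.filter (G.Adj a ·)).length :=
    List.length_pos_of_mem (List.mem_filter.2 ⟨List.mem_of_getLast? hz, by simpa using haz⟩)
  have := length_le_length_lineTour_add_one (G := G) (w :: rest)
  simp only [lineTour, List.length_append, List.length_cons, List.length_map,
    List.length_reverse] at this ⊢
  omega

end lineTour

theorem IsHamiltonianList.exists_isHamiltonianList_lineG {l : List V} (h : IsHamiltonianList G l)
    (h3 : 3 ≤ l.length) :
    ∃ L : List G.edgeSet, IsHamiltonianList (lineG G) L ∧ l.length ≤ L.length := by
  classical
  obtain ⟨hl, hmem, hch, hclose⟩ := h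
  obtain ⟨a, w, rest, rfl⟩ : ∃ a w rest, l = a :: w :: rest := by
    obtain _ | ⟨a, _ | ⟨w, rest⟩⟩ := l <;> simp_all
  obtain ⟨z, hz⟩ : ∃ z, rest.getLast? = some z :=
    ⟨_, List.getLast?_eq_some_getLast (by rintro rfl; simp at h3)⟩
  have haz : G.Adj a z := hclose a rfl z (by simp [List.getLast?_cons, hz])
  set T := lineTour G (a :: w :: rest)
  have hTnd : T.Nodup := nodup_lineTour hl
  have hTlen : (a :: w :: rest).length ≤ T.length := length_le_length_lineTour haz hz
  obtain ⟨L, hL⟩ : ∃ L : List G.edgeSet, L.map Subtype.val = T :=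
    CanLift.prf T fun _ => mem_edgeSet_of_mem_lineTour hch
  refine ⟨L, ⟨(hL ▸ hTnd).of_map _, ?_, ?_, ?_⟩, by simpa [← hL] using hTlen⟩
  · rintro ⟨e, he⟩
    induction e using Sym2.ind with
    | _ x y =>
      rw [← List.mem_map_of_injective Subtype.val_injective, hL]
      exact mk_mem_lineTour he (hmem x) (hmem y)
  · have hchT : (L.map Subtype.val).IsChain fun e f => e ≠ f ∧ ∃ x, x ∈ e ∧ x ∈ f :=
      hL ▸ hTnd.isChain.and (isChain_lineTour _)
    exact ((List.isChain_map _).1 hchT).imp fun e f h =>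
      ⟨Subtype.val_injective.ne_iff.1 h.1, h.2⟩
  · intro e he f hf
    have he' : e.1 ∈ T.head? := by rw [← hL, List.head?_map]; exact Option.mem_map_of_mem _ he
    have hf' : f.1 ∈ T.getLast? := by
      rw [← hL, List.getLast?_map]; exact Option.mem_map_of_mem _ hf
    refine ⟨Subtype.val_injective.ne_iff.1 (hTnd.head_ne_getLast (by omega) _ he' _ hf'), z, ?_,
      mem_of_mem_getLast?_lineTour (by simp [List.getLast?_cons, hz]) _ hf'⟩
    rw [head?_lineTour haz hz, Option.mem_some_iff] at he'
    exact he' ▸ Sym2.mem_mk_right a z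

theorem IsHamiltonianList.lineG_ne_top {l : List V} (h : IsHamiltonianList G l)
    (h4 : 4 ≤ l.length) : lineG G ≠ ⊤ := by
  obtain ⟨x₁, x₂, x₃, x₄, r, rfl⟩ : ∃ x₁ x₂ x₃ x₄ r, l = x₁ :: x₂ :: x₃ :: x₄ :: r := by
    obtain _ | ⟨x₁, _ | ⟨x₂, _ | ⟨x₃, _ | ⟨x₄, r⟩⟩⟩⟩ := l <;> simp_all
  obtain ⟨hl, -, hch, -⟩ := h
  simp only [List.isChain_cons_cons] at hch
  simp only [List.nodup_cons, List.mem_cons, not_or] at hl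
  intro htop
  have hadj : (lineG G).Adj ⟨s(x₁, x₂), hch.1⟩ ⟨s(x₃, x₄), hch.2.2.1⟩ := by
    rw [htop, top_adj, Ne, Subtype.ext_iff, Sym2.eq_iff]
    tauto
  obtain ⟨-, y, hy₁, hy₂⟩ := hadj
  simp only [Sym2.mem_iff] at hy₁ hy₂
  rcases hy₁ with rfl | rfl <;> rcases hy₂ with rfl | rfl <;> tauto

end SimpleGraph

/-- cfc(K_n) = 1 and cfc(L^k(K_n)) = 2 for n ≥ 4 and k ≥ 1. -/
theorem stmt_18 (n : ℕ) (hn : 4 ≤ n) :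
    cfcNum (⊤ : SimpleGraph (Fin n)) = 1 ∧
      ∀ k : ℕ, 1 ≤ k → cfcNum (iterLine (⊤ : SimpleGraph (Fin n)) k).2 = 2 := by
  have hham : ∀ k, ∃ l, (iterLine (⊤ : SimpleGraph (Fin n)) k).2.IsHamiltonianList l ∧
      4 ≤ l.length := by
    intro k
    induction k with
    | zero =>
      show ∃ l, (⊤ : SimpleGraph (Fin n)).IsHamiltonianList l ∧ 4 ≤ l.length
      have hlen : (List.finRange n).length = n := List.length_finRange
      exact ⟨_, isHamiltonianList_top (List.nodup_finRange n) List.mem_finRange (by omega),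
        by omega⟩
    | succ k ih =>
      obtain ⟨l, hl, hlen⟩ := ih
      obtain ⟨L, hL, hlL⟩ := hl.exists_isHamiltonianList_lineG (by omega)
      exact ⟨L, hL, hlen.trans hlL⟩
  have : Nontrivial (Fin n) := Fin.nontrivial_iff_two_le.2 (by omega)
  refine ⟨cfcNum_top, fun k hk => ?_⟩
  obtain ⟨j, rfl⟩ : ∃ j, k = j + 1 := ⟨k - 1, by omega⟩
  obtain ⟨l, hl, hlen⟩ := hham j
  obtain ⟨L, hL, -⟩ := hham (j + 1)
  exact cfcNum_eq_two hL.exists_isCFCColoring_lt_two (hl.lineG_ne_top hlen)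
end
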